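/- arXiv:1012.3153 — 7 statements merged into one kernel-verified Lean document; each statement's English description precedes it below -/
import Mathlib

section
/- Let 1 < q ≤ 2 and 0 ≤ r ≤ 1. Then for all t ∈ ℝ, a_q(0) ≤ a_q(t) ≤ a_q(π/2), where a_q(t) = ∫_{-π}^{π} |cos(s-t)|^q (1 + r² - 2r cos s)^{q-1} ds. -/
/-!
With `W s = (1 + r² - 2 r cos s)^(q-1)`, the function `a t = ∫ |cos (s - t)|^q W s` is even and
`π`-periodic, so it suffices that it is monotone on `[0, π/2]`. Its derivative is
`∫ g (s - t) W s` with `g = -(|cos|^q)'`. Shifting by `t` and folding `[-π, π]` onto `[0, π/2]`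
with the symmetries of `g` turns the integrand into `g u * (V (u + t) - V (u - t))`, where
`V x = W x + W (x + π)`. On `[0, π/2]` we have `g ≥ 0` and `|cos (u + t)| ≤ |cos (u - t)|`, and
`V x = φ (m - d) + φ (m + d)` with `φ = (·)^(q-1)` concave, `m = 1 + r²`, `d = 2 r cos x`, which
decreases as `|d|` grows.
-/

open Real intervalIntegral MeasureTheory Set Filter

lemma ConcaveOn.map_sub_add_map_add_le {s : Set ℝ} {φ : ℝ → ℝ} (hφ : ConcaveOn ℝ s φ)
    {m d₁ d₂ : ℝ} (hd : |d₁| ≤ |d₂|) (hs₁ : m - d₂ ∈ s) (hs₂ : m + d₂ ∈ s) :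
    φ (m - d₂) + φ (m + d₂) ≤ φ (m - d₁) + φ (m + d₁) := by
  rcases eq_or_ne d₂ 0 with rfl | hd₂
  · rw [abs_zero, abs_nonpos_iff] at hd
    rw [hd]
  set c := d₁ / d₂
  have hc : |c| ≤ 1 := by
    rw [abs_div, div_le_one (abs_pos.2 hd₂)]
    exact hd
  have hc₁ : 0 ≤ (1 + c) / 2 := by linarith [neg_abs_le c]
  have hc₂ : 0 ≤ (1 - c) / 2 := by linarith [le_abs_self c]
  have hcd : c * d₂ = d₁ := div_mul_cancel₀ d₁ hd₂
  have h₁ := hφ.2 hs₁ hs₂ hc₁ hc₂ (by ring)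
  have h₂ := hφ.2 hs₁ hs₂ hc₂ hc₁ (by ring)
  simp only [smul_eq_mul] at h₁ h₂
  rw [show (1 + c) / 2 * (m - d₂) + (1 - c) / 2 * (m + d₂) = m - d₁ by rw [← hcd]; ring] at h₁
  rw [show (1 - c) / 2 * (m - d₂) + (1 + c) / 2 * (m + d₂) = m + d₁ by rw [← hcd]; ring] at h₂
  linarith

lemma continuous_mul_abs_rpow_mul {q : ℝ} (hq : 1 < q) :
    Continuous fun x : ℝ => q * |x| ^ (q - 2) * x := by
  have h := (contDiff_norm_rpow (E := ℝ) hq).continuous_deriv le_rfl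
  simp only [Real.norm_eq_abs] at h
  rwa [funext fun x => (hasDerivAt_abs_rpow x hq).deriv] at h

lemma Function.Periodic.exists_mem_Icc_half_eq {α : Type*} {f : ℝ → α} {c : ℝ}
    (hf : Function.Periodic f c) (he : Function.Even f) (hc : 0 < c) (x : ℝ) :
    ∃ y ∈ Icc 0 (c / 2), f x = f y := by
  obtain ⟨y, hy, hxy⟩ := hf.exists_mem_Ico₀ hc x
  rcases le_or_gt y (c / 2) with h | h
  · exact ⟨y, ⟨hy.1, h⟩, hxy⟩
  · refine ⟨c - y, ⟨by linarith [hy.2], by linarith⟩, ?_⟩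
    rw [hxy, ← hf.sub_eq y, ← he (y - c), neg_sub]

lemma integral_neg_pi_pi_eq_integral_quarter {F : ℝ → ℝ} (hF : Continuous F) :
    ∫ u in (-π)..π, F u = ∫ u in 0..(π / 2), (F u + F (-u) + F (π - u) + F (u - π)) := by
  have hi : ∀ (G : ℝ → ℝ) (a b : ℝ), Continuous G → IntervalIntegrable G volume a b :=
    fun G a b hG => hG.intervalIntegrable a b
  have h₁ : ∫ u in 0..(π / 2), F (-u) = ∫ u in (-(π / 2))..0, F u := by
    rw [integral_comp_neg, neg_zero]
  have h₂ : ∫ u in 0..(π / 2), F (π - u) = ∫ u in (π / 2)..π, F u := by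
    rw [integral_comp_sub_left, sub_zero, sub_half]
  have h₃ : ∫ u in 0..(π / 2), F (u - π) = ∫ u in (-π)..(-(π / 2)), F u := by
    rw [integral_comp_sub_right, zero_sub, show π / 2 - π = -(π / 2) by ring]
  rw [intervalIntegral.integral_add (hi _ _ _ (by fun_prop)) (hi _ _ _ (by fun_prop)),
    intervalIntegral.integral_add (hi _ _ _ (by fun_prop)) (hi _ _ _ (by fun_prop)),
    intervalIntegral.integral_add (hi _ _ _ hF) (hi _ _ _ (by fun_prop)), h₁, h₂, h₃]
  have hsplit := integral_add_adjacent_intervals (hi F (-π) 0 hF) (hi F 0 π hF)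
  rw [← integral_add_adjacent_intervals (hi F _ (-(π / 2)) hF) (hi F _ 0 hF),
    ← integral_add_adjacent_intervals (hi F _ (π / 2) hF) (hi F _ π hF)] at hsplit
  linarith

noncomputable def aqWeight (q r s : ℝ) : ℝ := (1 + r ^ 2 - 2 * r * cos s) ^ (q - 1)

noncomputable def aq (q r t : ℝ) : ℝ := ∫ s in (-π)..π, |cos (s - t)| ^ q * aqWeight q r s

noncomputable def negDerivAbsCosRpow (q x : ℝ) : ℝ := q * |cos x| ^ (q - 2) * cos x * sin x

section

variable {q r : ℝ}

lemma one_add_sq_sub_two_mul_cos_nonneg (r s : ℝ) : 0 ≤ 1 + r ^ 2 - 2 * r * cos s := by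
  nlinarith [sq_nonneg (r - cos s), sin_sq_add_cos_sq s]

lemma aqWeight_nonneg (q r s : ℝ) : 0 ≤ aqWeight q r s :=
  rpow_nonneg (one_add_sq_sub_two_mul_cos_nonneg r s) _

lemma continuous_aqWeight (hq : 1 ≤ q) : Continuous (aqWeight q r) :=
  (by fun_prop : Continuous fun s => 1 + r ^ 2 - 2 * r * cos s).rpow_const
    fun _ => Or.inr (by linarith)

lemma aqWeight_even : Function.Even (aqWeight q r) := fun s => by
  rw [aqWeight, aqWeight, cos_neg]

lemma aqWeight_periodic : Function.Periodic (aqWeight q r) (2 * π) := fun s => by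
  rw [aqWeight, aqWeight, cos_add_two_pi]

lemma aqWeight_add_aqWeight_add_pi_le (hq₁ : 1 ≤ q) (hq₂ : q ≤ 2) {x y : ℝ}
    (h : |cos y| ≤ |cos x|) :
    aqWeight q r x + aqWeight q r (x + π) ≤ aqWeight q r y + aqWeight q r (y + π) := by
  simp only [aqWeight, cos_add_pi, mul_neg, sub_neg_eq_add]
  refine (concaveOn_rpow (by linarith) (by linarith)).map_sub_add_map_add_le ?_
    (one_add_sq_sub_two_mul_cos_nonneg r x) ?_
  · rw [abs_mul, abs_mul (2 * r)]
    exact mul_le_mul_of_nonneg_left h (abs_nonneg _)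
  · rw [mem_Ici]
    nlinarith [sq_nonneg (r + cos x), sin_sq_add_cos_sq x]

lemma abs_cos_add_le_abs_cos_sub {u t : ℝ} (hu : u ∈ Icc 0 (π / 2)) (ht : t ∈ Icc 0 (π / 2)) :
    |cos (u + t)| ≤ |cos (u - t)| := by
  have hcu := cos_nonneg_of_mem_Icc ⟨by linarith [hu.1, pi_pos], hu.2⟩
  have hct := cos_nonneg_of_mem_Icc ⟨by linarith [ht.1, pi_pos], ht.2⟩
  have hsu := sin_nonneg_of_nonneg_of_le_pi hu.1 (by linarith [hu.2, pi_pos])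
  have hst := sin_nonneg_of_nonneg_of_le_pi ht.1 (by linarith [ht.2, pi_pos])
  rw [cos_add, cos_sub, abs_of_nonneg (by positivity : 0 ≤ cos u * cos t + sin u * sin t),
    abs_le]
  constructor <;> nlinarith [mul_nonneg hcu hct, mul_nonneg hsu hst]

lemma continuous_negDerivAbsCosRpow (hq : 1 < q) : Continuous (negDerivAbsCosRpow q) :=
  ((continuous_mul_abs_rpow_mul hq).comp continuous_cos).mul continuous_sin

lemma negDerivAbsCosRpow_neg (x : ℝ) : negDerivAbsCosRpow q (-x) = -negDerivAbsCosRpow q x := by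
  simp only [negDerivAbsCosRpow, cos_neg, sin_neg]
  ring

lemma negDerivAbsCosRpow_pi_sub (x : ℝ) :
    negDerivAbsCosRpow q (π - x) = -negDerivAbsCosRpow q x := by
  simp only [negDerivAbsCosRpow, cos_pi_sub, sin_pi_sub, abs_neg]
  ring

lemma negDerivAbsCosRpow_periodic : Function.Periodic (negDerivAbsCosRpow q) π := fun x => by
  simp only [negDerivAbsCosRpow, cos_add_pi, sin_add_pi, abs_neg]
  ring

lemma negDerivAbsCosRpow_nonneg (hq : 0 ≤ q) {x : ℝ} (hx : x ∈ Icc 0 (π / 2)) :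
    0 ≤ negDerivAbsCosRpow q x := by
  have hc := cos_nonneg_of_mem_Icc ⟨by linarith [hx.1, pi_pos], hx.2⟩
  have hs := sin_nonneg_of_nonneg_of_le_pi hx.1 (by linarith [hx.2, pi_pos])
  unfold negDerivAbsCosRpow
  positivity

lemma abs_negDerivAbsCosRpow_le (hq : 1 < q) (x : ℝ) : |negDerivAbsCosRpow q x| ≤ q := by
  have hpow : |cos x| ^ (q - 2) * |cos x| = |cos x| ^ (q - 1) := by
    rw [← rpow_add_one' (abs_nonneg _) (by linarith)]
    ring_nf
  have hle : |cos x| ^ (q - 1) ≤ 1 := rpow_le_one (abs_nonneg _) (abs_cos_le_one x) (by linarith)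
  rw [negDerivAbsCosRpow, abs_mul, abs_mul, abs_mul, abs_of_pos (by linarith : 0 < q),
    abs_of_nonneg (rpow_nonneg (abs_nonneg _) _), mul_assoc q, hpow]
  calc q * |cos x| ^ (q - 1) * |sin x| ≤ q * 1 * 1 := by
        gcongr
        exact abs_sin_le_one x
    _ = q := by ring

lemma hasDerivAt_abs_cos_sub_rpow (hq : 1 < q) (s x : ℝ) :
    HasDerivAt (fun x => |cos (s - x)| ^ q) (negDerivAbsCosRpow q (s - x)) x := by
  have hcos : HasDerivAt (fun x => cos (s - x)) (sin (s - x)) x := by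
    simpa using ((hasDerivAt_id x).const_sub s).cos
  exact (hasDerivAt_abs_rpow (cos (s - x)) hq).comp x hcos

lemma hasDerivAt_aq (hq : 1 < q) (r t : ℝ) :
    HasDerivAt (aq q r) (∫ s in (-π)..π, negDerivAbsCosRpow q (s - t) * aqWeight q r s) t := by
  have hW := continuous_aqWeight (r := r) hq.le
  have hF : ∀ x, Continuous fun s => |cos (s - x)| ^ q * aqWeight q r s := fun x =>
    ((continuous_cos.comp (continuous_sub_right x)).abs.rpow_const
      fun _ => Or.inr (by linarith)).mul hW
  have hF' : Continuous fun s => negDerivAbsCosRpow q (s - t) * aqWeight q r s :=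
    ((continuous_negDerivAbsCosRpow hq).comp (continuous_sub_right t)).mul hW
  refine (hasDerivAt_integral_of_dominated_loc_of_deriv_le
    (F' := fun x s => negDerivAbsCosRpow q (s - x) * aqWeight q r s)
    (bound := fun s => q * aqWeight q r s)
    univ_mem (Eventually.of_forall fun x => (hF x).aestronglyMeasurable)
    ((hF t).intervalIntegrable _ _) hF'.aestronglyMeasurable (ae_of_all _ fun s _ x _ => ?_)
    ((continuous_const.mul hW).intervalIntegrable _ _) (ae_of_all _ fun s _ x _ => ?_)).2
  · rw [norm_mul, Real.norm_eq_abs, Real.norm_of_nonneg (aqWeight_nonneg q r s)]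
    exact mul_le_mul_of_nonneg_right (abs_negDerivAbsCosRpow_le hq _) (aqWeight_nonneg q r s)
  · exact (hasDerivAt_abs_cos_sub_rpow hq s x).mul_const _

lemma integral_negDerivAbsCosRpow_mul_aqWeight_nonneg (hq₁ : 1 < q) (hq₂ : q ≤ 2) {t : ℝ}
    (ht : t ∈ Icc 0 (π / 2)) :
    0 ≤ ∫ s in (-π)..π, negDerivAbsCosRpow q (s - t) * aqWeight q r s := by
  set F := fun u => negDerivAbsCosRpow q u * aqWeight q r (u + t)
  have hF : Continuous F :=
    (continuous_negDerivAbsCosRpow hq₁).mul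
      ((continuous_aqWeight hq₁.le).comp (continuous_add_const t))
  have hper : Function.Periodic F (2 * π) := fun u => by
    simp only [F]
    rw [add_right_comm u (2 * π) t, aqWeight_periodic, two_mul, ← add_assoc,
      negDerivAbsCosRpow_periodic, negDerivAbsCosRpow_periodic]
  have hshift : ∫ s in (-π)..π, negDerivAbsCosRpow q (s - t) * aqWeight q r s =
      ∫ u in (-π)..π, F u := by
    have h := hper.intervalIntegral_add_eq (-π - t) (-π)
    rw [show -π - t + 2 * π = π - t by ring, show -π + 2 * π = π by ring] at h
    rw [← h, ← integral_comp_sub_right]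
    simp only [F, sub_add_cancel]
  have hW : ∀ x y, cos x = cos y → aqWeight q r x = aqWeight q r y := fun x y h => by
    rw [aqWeight, aqWeight, h]
  rw [hshift, integral_neg_pi_pi_eq_integral_quarter hF]
  refine integral_nonneg (by positivity) fun u hu => ?_
  simp only [F, negDerivAbsCosRpow_neg, negDerivAbsCosRpow_pi_sub,
    negDerivAbsCosRpow_periodic.sub_eq]
  rw [hW (-u + t) (u - t) (by rw [show -u + t = -(u - t) by ring, cos_neg]),
    hW (π - u + t) (u - t + π)
      (by rw [show π - u + t = π - (u - t) by ring, cos_pi_sub, cos_add_pi]),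
    hW (u - π + t) (u + t + π) (by rw [show u - π + t = u + t - π by ring, cos_sub_pi, cos_add_pi])]
  have hfold :=
    aqWeight_add_aqWeight_add_pi_le (r := r) hq₁.le hq₂ (abs_cos_add_le_abs_cos_sub hu ht)
  have hg : 0 ≤ negDerivAbsCosRpow q u := negDerivAbsCosRpow_nonneg (by linarith) hu
  nlinarith [mul_le_mul_of_nonneg_left hfold hg]

lemma monotoneOn_aq (hq₁ : 1 < q) (hq₂ : q ≤ 2) : MonotoneOn (aq q r) (Icc 0 (π / 2)) :=
  monotoneOn_of_hasDerivWithinAt_nonneg (convex_Icc 0 (π / 2))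
    (fun t _ => (hasDerivAt_aq hq₁ r t).continuousAt.continuousWithinAt)
    (fun t _ => (hasDerivAt_aq hq₁ r t).hasDerivWithinAt)
    (fun _ ht => integral_negDerivAbsCosRpow_mul_aqWeight_nonneg hq₁ hq₂ (interior_subset ht))

lemma aq_even : Function.Even (aq q r) := fun t => by
  have h := integral_comp_neg (a := -π) (b := π) fun s => |cos (s - t)| ^ q * aqWeight q r s
  rw [neg_neg] at h
  rw [aq, aq, ← h]
  congr 1 with s
  rw [aqWeight_even, show -s - t = -(s - -t) by ring, cos_neg]

lemma aq_periodic : Function.Periodic (aq q r) π := fun t => by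
  simp only [aq, show ∀ s, s - (t + π) = s - t - π from fun s => by ring, cos_sub_pi, abs_neg]

end

theorem aq_extrema_q_le_two_general (q r : ℝ) (hq1 : 1 < q) (hq2 : q ≤ 2)
    (t : ℝ) :
    (∫ s in (-π)..π, |Real.cos (s - 0)| ^ q *
        (1 + r ^ 2 - 2 * r * Real.cos s) ^ (q - 1)) ≤
      (∫ s in (-π)..π, |Real.cos (s - t)| ^ q *
        (1 + r ^ 2 - 2 * r * Real.cos s) ^ (q - 1)) ∧
    (∫ s in (-π)..π, |Real.cos (s - t)| ^ q *
        (1 + r ^ 2 - 2 * r * Real.cos s) ^ (q - 1)) ≤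
      (∫ s in (-π)..π, |Real.cos (s - π / 2)| ^ q *
        (1 + r ^ 2 - 2 * r * Real.cos s) ^ (q - 1)) := by
  change aq q r 0 ≤ aq q r t ∧ aq q r t ≤ aq q r (π / 2)
  obtain ⟨t', ht', heq⟩ := aq_periodic.exists_mem_Icc_half_eq aq_even pi_pos t
  have hmono := monotoneOn_aq (r := r) hq1 hq2
  rw [heq]
  exact ⟨hmono ⟨le_rfl, by positivity⟩ ht' ht'.1, hmono ht' ⟨by positivity, le_rfl⟩ ht'.2⟩

theorem aq_extrema_q_le_two (q r : ℝ) (hq1 : 1 < q) (hq2 : q ≤ 2)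
    (hr0 : 0 ≤ r) (hr1 : r ≤ 1) (t : ℝ) :
    (∫ s in (-π)..π, |Real.cos (s - 0)| ^ q *
        (1 + r ^ 2 - 2 * r * Real.cos s) ^ (q - 1)) ≤
      (∫ s in (-π)..π, |Real.cos (s - t)| ^ q *
        (1 + r ^ 2 - 2 * r * Real.cos s) ^ (q - 1)) ∧
    (∫ s in (-π)..π, |Real.cos (s - t)| ^ q *
        (1 + r ^ 2 - 2 * r * Real.cos s) ^ (q - 1)) ≤
      (∫ s in (-π)..π, |Real.cos (s - π / 2)| ^ q *
        (1 + r ^ 2 - 2 * r * Real.cos s) ^ (q - 1)) :=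
  aq_extrema_q_le_two_general q r hq1 hq2 t
end

section
/- Let q ≥ 2 and 0 ≤ r ≤ 1. Then for all t ∈ ℝ, a_q(π/2) ≤ a_q(t) ≤ a_q(0), where a_q(t) = ∫_{-π}^{π} |cos(s-t)|^q (1 + r² - 2r cos s)^{q-1} ds. -/
/-!
Since `|cos|^q` has period `π`, `a_q` is `π`-periodic and even, so it suffices to show that `a_q`
is antitone on `[0, π/2]`. Substituting `s = u + t` moves `t` into the weight
`W(s) = (1 + r² - 2 r cos s)^(q-1)`, which is `C¹` because `q - 1 ≥ 1`; differentiating under the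
integral and substituting back gives `a_q'(t) = ∫ |cos (s - t)|^q W'(s) ds`. Folding `[-π, π]` onto
`[0, π/2]` by `s ↦ -s` and `s ↦ π - s`, and using that `W'` is odd, the integrand becomes
`(|cos (s - t)|^q - |cos (s + t)|^q) (W'(s) - W'(π - s))`. For `s, t ∈ [0, π/2]` the first factor
is `≥ 0`, and since `W'(s) = 2 r (q - 1) (1 + r² - 2 r cos s)^(q-2) sin s` with `q - 2 ≥ 0`,
the second is `≤ 0`.
-/

open Real Set Function intervalIntegral MeasureTheory

section IntervalIntegral

variable {E : Type*} [NormedAddCommGroup E] [NormedSpace ℝ E] {f : ℝ → E}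

theorem integral_symm_eq_integral_add_comp_neg (hf : Continuous f) (a : ℝ) :
    ∫ x in (-a)..a, f x = ∫ x in 0..a, (f x + f (-x)) := by
  rw [integral_add (g := fun x => f (-x)) (hf.intervalIntegrable _ _)
      ((hf.comp continuous_neg).intervalIntegrable _ _),
    integral_comp_neg, neg_zero, add_comm,
    integral_add_adjacent_intervals (hf.intervalIntegrable _ _) (hf.intervalIntegrable _ _)]

theorem integral_eq_integral_half_add_comp_sub (hf : Continuous f) (a : ℝ) :
    ∫ x in 0..a, f x = ∫ x in 0..a / 2, (f x + f (a - x)) := by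
  rw [integral_add (g := fun x => f (a - x)) (hf.intervalIntegrable _ _)
      ((hf.comp (continuous_sub_left a)).intervalIntegrable _ _),
    integral_comp_sub_left, sub_zero, show a - a / 2 = a / 2 by ring,
    integral_add_adjacent_intervals (hf.intervalIntegrable _ _) (hf.intervalIntegrable _ _)]

theorem Function.Periodic.intervalIntegral_comp_add_right {T : ℝ} (hf : Periodic f T) (a t : ℝ) :
    ∫ u in a..a + T, f (u + t) = ∫ u in a..a + T, f u := by
  rw [integral_comp_add_right, add_right_comm, hf.intervalIntegral_add_eq (a + t) a]

end IntervalIntegral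

theorem Function.Periodic.exists_mem_Icc_half_eq_of_even {α : Type*} {f : ℝ → α} {c : ℝ}
    (h : Periodic f c) (hc : 0 < c) (heven : ∀ x, f (-x) = f x) (x : ℝ) :
    ∃ y ∈ Icc 0 (c / 2), f x = f y := by
  obtain ⟨y, ⟨hy0, hyc⟩, hxy⟩ := h.exists_mem_Ico₀ hc x
  rcases le_total y (c / 2) with hy | hy
  · exact ⟨y, ⟨hy0, hy⟩, hxy⟩
  · exact ⟨c - y, ⟨by linarith, by linarith⟩, by rw [hxy, h.sub_eq', heven]⟩

theorem hasDerivAt_integral_mul_comp_add {k φ φ' : ℝ → ℝ} {a b C : ℝ} (hk : Continuous k)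
    (hφ : ∀ x, HasDerivAt φ (φ' x) x) (hφ' : Continuous φ') (hC : ∀ x, |φ' x| ≤ C) (x : ℝ) :
    HasDerivAt (fun y => ∫ u in a..b, k u * φ (u + y)) (∫ u in a..b, k u * φ' (u + x)) x := by
  have hφc : Continuous φ := continuous_iff_continuousAt.2 fun x => (hφ x).continuousAt
  refine (intervalIntegral.hasDerivAt_integral_of_dominated_loc_of_deriv_le
    (F := fun y u => k u * φ (u + y)) (F' := fun y u => k u * φ' (u + y))
    (bound := fun u => |k u| * C) Filter.univ_mem ?_ ?_ ?_ ?_ ?_ ?_).2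
  · exact .of_forall fun y => (hk.mul (hφc.comp (continuous_add_const y))).aestronglyMeasurable
  · exact (hk.mul (hφc.comp (continuous_add_const x))).intervalIntegrable _ _
  · exact (hk.mul (hφ'.comp (continuous_add_const x))).aestronglyMeasurable
  · refine .of_forall fun u _ y _ => ?_
    rw [norm_mul, Real.norm_eq_abs, Real.norm_eq_abs]
    exact mul_le_mul_of_nonneg_left (hC _) (abs_nonneg _)
  · exact (hk.abs.mul continuous_const).intervalIntegrable _ _
  · exact .of_forall fun u _ y _ => ((hφ (u + y)).comp_const_add u y).const_mul (k u)

theorem abs_cos_add_le_abs_cos_sub_s3 {s x : ℝ} (hs : s ∈ Icc 0 (π / 2)) (hx : x ∈ Icc 0 (π / 2)) :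
    |cos (s + x)| ≤ |cos (s - x)| := by
  have hsin : 0 ≤ sin s * sin x :=
    mul_nonneg (sin_nonneg_of_nonneg_of_le_pi hs.1 (by linarith [hs.2, pi_pos]))
      (sin_nonneg_of_nonneg_of_le_pi hx.1 (by linarith [hx.2, pi_pos]))
  have hcos : 0 ≤ cos s * cos x :=
    mul_nonneg (cos_nonneg_of_mem_Icc ⟨by linarith [hs.1, pi_pos], hs.2⟩)
      (cos_nonneg_of_mem_Icc ⟨by linarith [hx.1, pi_pos], hx.2⟩)
  apply abs_le_abs <;> rw [cos_add, cos_sub] <;> linarith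

/-- `1 + r² - 2 r cos s = |e^{is} - r|²`. -/
noncomputable def circleDistSq (r s : ℝ) : ℝ := 1 + r ^ 2 - 2 * r * cos s

noncomputable def circleDistSqRpowDeriv (p r s : ℝ) : ℝ :=
  p * circleDistSq r s ^ (p - 1) * (2 * r * sin s)

/-- `a_q(t)` is `cosPowIntegral q (q - 1) r t`. -/
noncomputable def cosPowIntegral (q p r t : ℝ) : ℝ :=
  ∫ s in (-π)..π, |cos (s - t)| ^ q * circleDistSq r s ^ p

section CircleDistSq

variable {p r : ℝ}

theorem circleDistSq_nonneg (r s : ℝ) : 0 ≤ circleDistSq r s := by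
  have h : circleDistSq r s = (r - cos s) ^ 2 + sin s ^ 2 := by
    unfold circleDistSq; linear_combination (sin_sq_add_cos_sq s).symm
  rw [h]; positivity

theorem circleDistSq_le_pi_sub (hr : 0 ≤ r) {s : ℝ} (hs : 0 ≤ cos s) :
    circleDistSq r s ≤ circleDistSq r (π - s) := by
  unfold circleDistSq; rw [cos_pi_sub]; nlinarith [mul_nonneg hr hs]

theorem continuous_circleDistSq (r : ℝ) : Continuous (circleDistSq r) := by
  unfold circleDistSq; fun_prop

theorem periodic_circleDistSq (r : ℝ) : Periodic (circleDistSq r) (2 * π) := by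
  intro s; simp only [circleDistSq, cos_add_two_pi]

theorem hasDerivAt_circleDistSq_rpow (hp : 1 ≤ p) (r s : ℝ) :
    HasDerivAt (fun s => circleDistSq r s ^ p) (circleDistSqRpowDeriv p r s) s := by
  have h : HasDerivAt (circleDistSq r) (2 * r * sin s) s := by
    have h := ((hasDerivAt_cos s).const_mul (2 * r)).const_sub (1 + r ^ 2)
    rwa [show -(2 * r * -sin s) = 2 * r * sin s by ring] at h
  exact (hasDerivAt_rpow_const (Or.inr hp)).comp s h

theorem continuous_circleDistSqRpowDeriv (hp : 1 ≤ p) (r : ℝ) :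
    Continuous (circleDistSqRpowDeriv p r) := by
  unfold circleDistSqRpowDeriv
  have := (continuous_rpow_const (by linarith : 0 ≤ p - 1)).comp (continuous_circleDistSq r)
  fun_prop

theorem periodic_circleDistSqRpowDeriv (p r : ℝ) :
    Periodic (circleDistSqRpowDeriv p r) (2 * π) := by
  intro s; simp only [circleDistSqRpowDeriv, periodic_circleDistSq r s, sin_add_two_pi]

theorem circleDistSqRpowDeriv_neg (p r s : ℝ) :
    circleDistSqRpowDeriv p r (-s) = -circleDistSqRpowDeriv p r s := by
  simp only [circleDistSqRpowDeriv, circleDistSq, cos_neg, sin_neg]; ring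

theorem circleDistSqRpowDeriv_le_pi_sub (hp : 1 ≤ p) (hr : 0 ≤ r) {s : ℝ}
    (hs : s ∈ Icc 0 (π / 2)) : circleDistSqRpowDeriv p r s ≤ circleDistSqRpowDeriv p r (π - s) := by
  have hsin : 0 ≤ sin s := sin_nonneg_of_nonneg_of_le_pi hs.1 (by linarith [hs.2, pi_pos])
  have hcos : 0 ≤ cos s := cos_nonneg_of_mem_Icc ⟨by linarith [hs.1, pi_pos], hs.2⟩
  unfold circleDistSqRpowDeriv
  rw [sin_pi_sub]
  have := rpow_le_rpow (circleDistSq_nonneg r s) (circleDistSq_le_pi_sub hr hcos)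
    (by linarith : 0 ≤ p - 1)
  gcongr

end CircleDistSq

section CosPowIntegral

variable {q p r : ℝ}

theorem continuous_abs_cos_rpow (hq : 0 ≤ q) : Continuous fun u => |cos u| ^ q :=
  (continuous_rpow_const hq).comp continuous_cos.abs

theorem integral_abs_cos_rpow_mul_comp_add {g : ℝ → ℝ} (hg : Periodic g (2 * π)) (q x : ℝ) :
    ∫ u in (-π)..π, |cos u| ^ q * g (u + x) = ∫ s in (-π)..π, |cos (s - x)| ^ q * g s := by
  have hper : Periodic (fun s => |cos (s - x)| ^ q * g s) (2 * π) := by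
    intro s
    simp only [show s + 2 * π - x = s - x + 2 * π by ring, cos_add_two_pi, hg s]
  have h := hper.intervalIntegral_comp_add_right (-π) x
  simp only [add_sub_cancel_right, show -π + 2 * π = π by ring] at h
  exact h

theorem hasDerivAt_cosPowIntegral (hq : 0 ≤ q) (hp : 1 ≤ p) (r x : ℝ) :
    HasDerivAt (cosPowIntegral q p r)
      (∫ s in (-π)..π, |cos (s - x)| ^ q * circleDistSqRpowDeriv p r s) x := by
  obtain ⟨C, hC⟩ := ((periodic_circleDistSqRpowDeriv p r).isBounded_of_continuous
    two_pi_pos.ne' (continuous_circleDistSqRpowDeriv hp r)).exists_norm_le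
  have h := hasDerivAt_integral_mul_comp_add (a := -π) (b := π) (continuous_abs_cos_rpow hq)
    (hasDerivAt_circleDistSq_rpow hp r) (continuous_circleDistSqRpowDeriv hp r)
    (fun s => hC _ (mem_range_self s)) x
  rw [integral_abs_cos_rpow_mul_comp_add (periodic_circleDistSqRpowDeriv p r)] at h
  convert h using 1
  funext y
  exact (integral_abs_cos_rpow_mul_comp_add (g := fun s => circleDistSq r s ^ p)
    (fun s => congrArg (· ^ p) (periodic_circleDistSq r s)) q y).symm

theorem integral_abs_cos_rpow_mul_circleDistSqRpowDeriv_nonpos (hq : 0 ≤ q) (hp : 1 ≤ p)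
    (hr : 0 ≤ r) {x : ℝ} (hx : x ∈ Icc 0 (π / 2)) :
    ∫ s in (-π)..π, |cos (s - x)| ^ q * circleDistSqRpowDeriv p r s ≤ 0 := by
  set D := circleDistSqRpowDeriv p r
  set g : ℝ → ℝ := fun s => |cos (s - x)| ^ q * D s
  have hg : Continuous g := ((continuous_abs_cos_rpow hq).comp (continuous_sub_right x)).mul
    (continuous_circleDistSqRpowDeriv hp r)
  have hfold : ∀ s, g s + g (-s) + (g (π - s) + g (-(π - s))) =
      (|cos (s - x)| ^ q - |cos (s + x)| ^ q) * (D s - D (π - s)) := by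
    intro s
    have e₁ : |cos (-s - x)| = |cos (s + x)| := by
      rw [show -s - x = -(s + x) by ring, cos_neg]
    have e₂ : |cos (π - s - x)| = |cos (s + x)| := by
      rw [show π - s - x = π - (s + x) by ring, cos_pi_sub, abs_neg]
    have e₃ : |cos (-(π - s) - x)| = |cos (s - x)| := by
      rw [show -(π - s) - x = -(π - (s - x)) by ring, cos_neg, cos_pi_sub, abs_neg]
    simp only [g, e₁, e₂, e₃, D, circleDistSqRpowDeriv_neg]
    ring
  have hg₂ : Continuous fun s => g s + g (-s) := hg.add (hg.comp continuous_neg)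
  rw [integral_symm_eq_integral_add_comp_neg hg, integral_eq_integral_half_add_comp_sub hg₂]
  refine (integral_mono_on (g := fun _ => 0) (by positivity)
    ((hg₂.add (hg₂.comp (continuous_sub_left π))).intervalIntegrable _ _)
    intervalIntegrable_const fun s hs => ?_).trans_eq integral_zero
  change g s + g (-s) + (g (π - s) + g (-(π - s))) ≤ 0
  rw [hfold]
  refine mul_nonpos_of_nonneg_of_nonpos ?_ ?_
  · exact sub_nonneg.2 (rpow_le_rpow (abs_nonneg _) (abs_cos_add_le_abs_cos_sub_s3 hs hx) hq)
  · exact sub_nonpos.2 (circleDistSqRpowDeriv_le_pi_sub hp hr hs)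

theorem cosPowIntegral_antitoneOn (hq : 0 ≤ q) (hp : 1 ≤ p) (hr : 0 ≤ r) :
    AntitoneOn (cosPowIntegral q p r) (Icc 0 (π / 2)) :=
  antitoneOn_of_hasDerivWithinAt_nonpos (convex_Icc _ _)
    (fun x _ => (hasDerivAt_cosPowIntegral hq hp r x).continuousAt.continuousWithinAt)
    (fun x _ => (hasDerivAt_cosPowIntegral hq hp r x).hasDerivWithinAt)
    (fun _ hx => integral_abs_cos_rpow_mul_circleDistSqRpowDeriv_nonpos hq hp hr
      (interior_subset hx))

theorem periodic_cosPowIntegral (q p r : ℝ) : Periodic (cosPowIntegral q p r) π := by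
  intro t
  refine integral_congr fun s _ => ?_
  simp only [show s - (t + π) = s - t - π by ring, cos_sub_pi, abs_neg]

theorem cosPowIntegral_neg (q p r t : ℝ) : cosPowIntegral q p r (-t) = cosPowIntegral q p r t := by
  have h := integral_comp_neg (a := -π) (b := π)
    fun s => |cos (s - t)| ^ q * circleDistSq r s ^ p
  rw [neg_neg] at h
  rw [cosPowIntegral, cosPowIntegral, ← h]
  refine integral_congr fun s _ => ?_
  simp only [circleDistSq, cos_neg, show -s - t = -(s - -t) by ring]

end CosPowIntegral

theorem aq_extrema_q_ge_two_general (q r : ℝ) (hq : 2 ≤ q)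
    (hr0 : 0 ≤ r) (t : ℝ) :
    (∫ s in (-π)..π, |Real.cos (s - π / 2)| ^ q *
        (1 + r ^ 2 - 2 * r * Real.cos s) ^ (q - 1)) ≤
      (∫ s in (-π)..π, |Real.cos (s - t)| ^ q *
        (1 + r ^ 2 - 2 * r * Real.cos s) ^ (q - 1)) ∧
    (∫ s in (-π)..π, |Real.cos (s - t)| ^ q *
        (1 + r ^ 2 - 2 * r * Real.cos s) ^ (q - 1)) ≤
      (∫ s in (-π)..π, |Real.cos (s - 0)| ^ q *
        (1 + r ^ 2 - 2 * r * Real.cos s) ^ (q - 1)) := by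
  change cosPowIntegral q (q - 1) r (π / 2) ≤ cosPowIntegral q (q - 1) r t ∧
    cosPowIntegral q (q - 1) r t ≤ cosPowIntegral q (q - 1) r 0
  obtain ⟨t', ht', heq⟩ := (periodic_cosPowIntegral q (q - 1) r).exists_mem_Icc_half_eq_of_even
    pi_pos (cosPowIntegral_neg q (q - 1) r) t
  have hanti : AntitoneOn (cosPowIntegral q (q - 1) r) (Icc 0 (π / 2)) :=
    cosPowIntegral_antitoneOn (by linarith) (by linarith) hr0
  have h0 : (0 : ℝ) ∈ Icc 0 (π / 2) := ⟨le_rfl, by positivity⟩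
  have hπ : π / 2 ∈ Icc 0 (π / 2) := ⟨by positivity, le_rfl⟩
  rw [heq]
  exact ⟨hanti ht' hπ ht'.2, hanti h0 ht' ht'.1⟩

theorem aq_extrema_q_ge_two (q r : ℝ) (hq : 2 ≤ q)
    (hr0 : 0 ≤ r) (hr1 : r ≤ 1) (t : ℝ) :
    (∫ s in (-π)..π, |Real.cos (s - π / 2)| ^ q *
        (1 + r ^ 2 - 2 * r * Real.cos s) ^ (q - 1)) ≤
      (∫ s in (-π)..π, |Real.cos (s - t)| ^ q *
        (1 + r ^ 2 - 2 * r * Real.cos s) ^ (q - 1)) ∧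
    (∫ s in (-π)..π, |Real.cos (s - t)| ^ q *
        (1 + r ^ 2 - 2 * r * Real.cos s) ^ (q - 1)) ≤
      (∫ s in (-π)..π, |Real.cos (s - 0)| ^ q *
        (1 + r ^ 2 - 2 * r * Real.cos s) ^ (q - 1)) :=
  aq_extrema_q_ge_two_general q r hq hr0 t
end

section
/- For λ ≥ 0, 0 ≤ r ≤ 1 and q ≥ 1, and for every t ∈ ℝ there exists t' ∈ [0, 2π] such that ∫_0^{2π} |cos(s - t)|^λ |r - e^{is}|^{2q-2} ds ≤ ∫_0^{2π} |cos(s - t')|^λ |1 - e^{is}|^{2q-2} ds. -/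
/-!
For `‖z‖ < 1 ≤ ‖w‖`, `ζ ↦ ‖ζ - w‖ ^ p` is a constant times the modulus of `(1 - ζ / w) ^ p`,
which is holomorphic on the unit disc and continuous up to its boundary, so the Poisson integral
formula bounds `‖z - w‖ ^ p` by the Poisson average of its values on the circle. Integrating this
against the weight `|cos (s - t)| ^ λ` and exchanging the integrals, the integral at `z = r` is at
most a Poisson average over `u` of the integrals at the boundary points `z = e^{iu}`. By a
rotation, the integral at `e^{iu}` is the integral at `1` with `t` replaced by `t - u`; as a
continuous `2π`-periodic function of `t`, this is bounded by its value at a maximiser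
`t' ∈ [0, 2π]`.
-/

open Real Complex Metric MeasureTheory Set Function InnerProductSpace

theorem Function.Periodic.exists_mem_Icc_forall_le {α : Type*} [LinearOrder α]
    [TopologicalSpace α] [ClosedIciTopology α] {g : ℝ → α} {T : ℝ} (hg : Periodic g T)
    (hT : 0 < T) (hcont : Continuous g) : ∃ t ∈ Icc 0 T, ∀ x, g x ≤ g t := by
  obtain ⟨t, ht, hmax⟩ := isCompact_Icc.exists_isMaxOn (nonempty_Icc.2 hT.le) hcont.continuousOn
  refine ⟨t, ht, fun x ↦ ?_⟩
  obtain ⟨y, hy, hxy⟩ := hg.exists_mem_Ico₀ hT x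
  exact hxy ▸ hmax (Ico_subset_Icc_self hy)

theorem intervalIntegral_swap_of_continuous {E : Type*} [NormedAddCommGroup E]
    [NormedSpace ℝ E] {F : ℝ → ℝ → E} (hF : Continuous (uncurry F)) (a b c d : ℝ) :
    ∫ x in a..b, ∫ y in c..d, F x y = ∫ y in c..d, ∫ x in a..b, F x y :=
  intervalIntegral_intervalIntegral_swap <|
    (hF.continuousOn.integrableOn_compact (isCompact_uIcc.prod isCompact_uIcc)).mono_set
      (prod_mono uIoc_subset_uIcc uIoc_subset_uIcc)

lemma norm_circleAverage_le {E : Type*} [NormedAddCommGroup E] [NormedSpace ℝ E] {f : ℂ → E}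
    {c : ℂ} {R : ℝ} : ‖circleAverage f c R‖ ≤ circleAverage (‖f ·‖) c R := by
  rw [circleAverage, circleAverage, norm_smul, smul_eq_mul, norm_inv,
    Real.norm_of_nonneg two_pi_pos.le]
  gcongr
  exact intervalIntegral.norm_integral_le_integral_norm two_pi_pos.le

section PoissonKernel

variable {c w z : ℂ} {R : ℝ}

lemma poissonKernel_nonneg (h : ‖w - c‖ ≤ ‖z - c‖) : 0 ≤ poissonKernel c w z :=
  div_nonneg (sub_nonneg.2 (pow_le_pow_left₀ (norm_nonneg _) h 2)) (sq_nonneg _)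

lemma continuousOn_poissonKernel_sphere (hw : w ∈ ball c R) :
    ContinuousOn (poissonKernel c w) (sphere c R) := by
  refine ContinuousOn.div (by fun_prop) (by fun_prop) fun ζ hζ ↦ ?_
  rw [sub_sub_sub_cancel_right, pow_ne_zero_iff two_ne_zero, norm_ne_zero_iff, sub_ne_zero]
  rintro rfl
  exact (ne_of_lt (mem_ball_iff_norm.1 hw)) (mem_sphere_iff_norm.1 hζ)

lemma circleAverage_poissonKernel (hw : w ∈ ball c R) :
    circleAverage (poissonKernel c w) c R = 1 := by
  simpa [Pi.mul_def] using (harmonicOnNhd_const (1 : ℝ)).circleAverage_poissonKernel_smul hw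

lemma circleAverage_poissonKernel_smul_le {g : ℂ → ℝ} {M : ℝ} (hw : w ∈ ball c R)
    (hg : ContinuousOn g (sphere c R)) (hM : ∀ ζ ∈ sphere c R, g ζ ≤ M) :
    circleAverage (poissonKernel c w • g) c R ≤ M := by
  have hR : 0 < R := pos_of_mem_ball hw
  have hP := continuousOn_poissonKernel_sphere hw
  calc circleAverage (poissonKernel c w • g) c R
      ≤ circleAverage (poissonKernel c w • fun _ ↦ M) c R := by
        refine circleAverage_mono ?_ ?_ fun ζ hζ ↦ ?_
        · exact (hP.smul hg).circleIntegrable hR.le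
        · exact (hP.smul continuousOn_const).circleIntegrable hR.le
        rw [abs_of_pos hR] at hζ
        exact mul_le_mul_of_nonneg_left (hM ζ hζ) (poissonKernel_nonneg
          ((mem_ball_iff_norm.1 hw).le.trans (mem_sphere_iff_norm.1 hζ).ge))
    _ = M := by
        rw [show poissonKernel c w • (fun _ ↦ M) = M • poissonKernel c w by ext; simp [mul_comm],
          circleAverage_smul, circleAverage_poissonKernel hw, smul_eq_mul, mul_one]

lemma re_one_sub_div_nonneg (hw : R ≤ ‖w - c‖) {ζ : ℂ} (hζ : ζ ∈ closedBall c R) :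
    0 ≤ (1 - (ζ - c) / (w - c)).re := by
  have hlt : ‖(ζ - c) / (w - c)‖ ≤ 1 := by
    rw [norm_div]
    exact div_le_one_of_le₀ ((mem_closedBall_iff_norm.1 hζ).trans hw) (norm_nonneg _)
  have := (re_le_norm ((ζ - c) / (w - c))).trans hlt
  simp only [sub_re, one_re]
  linarith

lemma re_one_sub_div_pos (hw : R ≤ ‖w - c‖) {ζ : ℂ} (hζ : ζ ∈ ball c R) :
    0 < (1 - (ζ - c) / (w - c)).re := by
  have hζw := (mem_ball_iff_norm.1 hζ).trans_le hw
  have hlt : ‖(ζ - c) / (w - c)‖ < 1 := by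
    rw [norm_div]
    exact (div_lt_one ((norm_nonneg _).trans_lt hζw)).2 hζw
  have := (re_le_norm ((ζ - c) / (w - c))).trans_lt hlt
  simp only [sub_re, one_re]
  linarith

lemma norm_sub_rpow_le_circleAverage_poissonKernel {p : ℝ} (hp : 0 ≤ p) (hw : R ≤ ‖w - c‖)
    (hz : z ∈ ball c R) :
    ‖z - w‖ ^ p ≤ circleAverage (poissonKernel c z • fun ζ ↦ ‖ζ - w‖ ^ p) c R := by
  have hR : 0 < R := pos_of_mem_ball hz
  have hwc : w - c ≠ 0 := norm_pos_iff.1 (hR.trans_le hw)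
  set h : ℂ → ℂ := fun ζ ↦ (1 - (ζ - c) / (w - c)) ^ (p : ℂ)
  have hnorm (ζ : ℂ) : ‖w - c‖ ^ p * ‖h ζ‖ = ‖ζ - w‖ ^ p := by
    rw [norm_cpow_real, ← mul_rpow (norm_nonneg _) (norm_nonneg _), ← norm_mul, mul_sub,
      mul_one, mul_div_cancel₀ _ hwc, norm_sub_rev, sub_sub_sub_cancel_right]
  have hh : DiffContOnCl ℂ h (ball c R) := by
    refine ⟨DifferentiableOn.cpow_const (by fun_prop) fun ζ hζ ↦ ?_, ?_⟩
    · exact .inl (re_one_sub_div_pos hw hζ)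
    rw [closure_ball c hR.ne']
    rcases hp.eq_or_lt with rfl | hp
    · simpa [h] using continuousOn_const
    refine fun ζ hζ ↦ ContinuousAt.continuousWithinAt ?_
    exact (continuousAt_cpow_const_of_re_pos (.inl (re_one_sub_div_nonneg hw hζ))
      (by rwa [ofReal_re])).comp (f := fun ζ ↦ 1 - (ζ - c) / (w - c)) (by fun_prop)
  calc ‖z - w‖ ^ p = ‖w - c‖ ^ p * ‖circleAverage (poissonKernel c z • h) c R‖ := by
        rw [hh.circleAverage_poissonKernel_smul hz, hnorm]
    _ ≤ ‖w - c‖ ^ p * circleAverage (‖(poissonKernel c z • h) ·‖) c R := by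
        gcongr
        exact norm_circleAverage_le
    _ = circleAverage (poissonKernel c z • fun ζ ↦ ‖ζ - w‖ ^ p) c R := by
        rw [← smul_eq_mul, ← circleAverage_smul]
        refine circleAverage_congr_sphere fun ζ hζ ↦ ?_
        rw [abs_of_pos hR] at hζ
        have hP := poissonKernel_nonneg (w := z)
          ((mem_ball_iff_norm.1 hz).le.trans (mem_sphere_iff_norm.1 hζ).ge)
        change ‖w - c‖ ^ p * ‖poissonKernel c z ζ • h ζ‖ =
          poissonKernel c z ζ * ‖ζ - w‖ ^ p
        rw [norm_smul, Real.norm_of_nonneg hP, ← hnorm ζ]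
        ring

end PoissonKernel

lemma norm_circleMap_sub_circleMap_add (u s : ℝ) :
    ‖circleMap 0 1 u - circleMap 0 1 (s + u)‖ = ‖1 - circleMap 0 1 s‖ := by
  rw [show circleMap 0 1 (s + u) = circleMap 0 1 s * circleMap 0 1 u by
    rw [circleMap_zero_mul, one_mul], ← one_sub_mul, norm_mul]
  simp

section CircleWeight

variable {f : ℝ → ℝ} {p : ℝ}

lemma integral_mul_norm_circleMap_sub_rpow (hf : Periodic f (2 * π)) (u : ℝ) :
    ∫ s in 0..2 * π, f s * ‖circleMap 0 1 u - circleMap 0 1 s‖ ^ p =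
      ∫ s in 0..2 * π, f (s + u) * ‖1 - circleMap 0 1 s‖ ^ p := by
  set g : ℝ → ℝ := fun s ↦ f s * ‖circleMap 0 1 u - circleMap 0 1 s‖ ^ p
  have hg : Periodic g (2 * π) := fun s ↦ by simp only [g, hf s, periodic_circleMap 0 1 s]
  simp_rw [← norm_circleMap_sub_circleMap_add u]
  rw [intervalIntegral.integral_comp_add_right g, zero_add, add_comm,
    hg.intervalIntegral_add_eq u 0, zero_add]

lemma integral_mul_norm_sub_rpow_le_of_mem_ball (hf : Continuous f) (hf0 : ∀ s, 0 ≤ f s)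
    (hp : 0 ≤ p) {z : ℂ} (hz : z ∈ ball 0 1) {M : ℝ}
    (hM : ∀ ζ ∈ sphere (0 : ℂ) 1,
      ∫ s in 0..2 * π, f s * ‖ζ - circleMap 0 1 s‖ ^ p ≤ M) :
    ∫ s in 0..2 * π, f s * ‖z - circleMap 0 1 s‖ ^ p ≤ M := by
  set G : ℂ → ℝ := fun ζ ↦ ∫ s in 0..2 * π, f s * ‖ζ - circleMap 0 1 s‖ ^ p
  have hG : Continuous G :=
    intervalIntegral.continuous_parametric_intervalIntegral_of_continuous'
      (by fun_prop (disch := exact fun _ ↦ .inr hp)) _ _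
  set k : ℝ → ℝ := fun θ ↦ poissonKernel 0 z (circleMap 0 1 θ)
  have hk : Continuous k := (continuousOn_poissonKernel_sphere hz).comp_continuous
    (continuous_circleMap 0 1) (circleMap_mem_sphere 0 zero_le_one)
  set K : ℝ → ℝ → ℝ := fun s θ ↦
    f s * (k θ * ‖circleMap 0 1 θ - circleMap 0 1 s‖ ^ p)
  have hK : Continuous (uncurry K) := by fun_prop (disch := exact fun _ ↦ .inr hp)
  have hpt (s : ℝ) :
      f s * ‖z - circleMap 0 1 s‖ ^ p ≤ (2 * π)⁻¹ * ∫ θ in 0..2 * π, K s θ := by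
    have h := norm_sub_rpow_le_circleAverage_poissonKernel hp (w := circleMap 0 1 s) (by simp) hz
    rw [intervalIntegral.integral_const_mul, mul_left_comm]
    exact mul_le_mul_of_nonneg_left h (hf0 s)
  calc G z ≤ ∫ s in 0..2 * π, (2 * π)⁻¹ * ∫ θ in 0..2 * π, K s θ := by
        refine intervalIntegral.integral_mono_on two_pi_pos.le ?_ ?_ fun s _ ↦ hpt s
        · exact Continuous.intervalIntegrable
            (by fun_prop (disch := exact fun _ ↦ .inr hp)) _ _
        · exact (continuous_const.mul <|
            intervalIntegral.continuous_parametric_intervalIntegral_of_continuous' hK _ _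
            ).intervalIntegrable _ _
    _ = circleAverage (poissonKernel 0 z • G) 0 1 := by
        rw [intervalIntegral.integral_const_mul, intervalIntegral_swap_of_continuous hK,
          circleAverage_def, smul_eq_mul]
        congr 1
        refine intervalIntegral.integral_congr fun θ _ ↦ ?_
        simp only [K, G, Pi.mul_apply, ← intervalIntegral.integral_const_mul, smul_eq_mul]
        congr 1
        ext s
        ring
    _ ≤ M := circleAverage_poissonKernel_smul_le hz hG.continuousOn hM

lemma integral_mul_norm_sub_rpow_le (hf : Continuous f) (hf0 : ∀ s, 0 ≤ f s)
    (hfper : Periodic f (2 * π)) (hp : 0 ≤ p) {z : ℂ} (hz : ‖z‖ ≤ 1) {M : ℝ}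
    (hM : ∀ u, ∫ s in 0..2 * π, f (s + u) * ‖1 - circleMap 0 1 s‖ ^ p ≤ M) :
    ∫ s in 0..2 * π, f s * ‖z - circleMap 0 1 s‖ ^ p ≤ M := by
  have hsphere (ζ : ℂ) (hζ : ζ ∈ sphere (0 : ℂ) 1) :
      ∫ s in 0..2 * π, f s * ‖ζ - circleMap 0 1 s‖ ^ p ≤ M := by
    have hζ_eq : circleMap 0 1 (arg ζ) = ζ := by
      simpa [circleMap_zero, mem_sphere_zero_iff_norm.1 hζ] using norm_mul_exp_arg_mul_I ζ
    rw [← hζ_eq, integral_mul_norm_circleMap_sub_rpow hfper]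
    exact hM _
  rcases hz.lt_or_eq with hz | hz
  · exact integral_mul_norm_sub_rpow_le_of_mem_ball hf hf0 hp (mem_ball_zero_iff.2 hz) hsphere
  · exact hsphere z (mem_sphere_zero_iff_norm.2 hz)

end CircleWeight

theorem colonna_extremal_on_boundary (lam q r : ℝ) (hlam : 0 ≤ lam) (hq : 1 ≤ q)
    (hr0 : 0 ≤ r) (hr1 : r ≤ 1) (t : ℝ) :
    ∃ t' ∈ Set.Icc (0 : ℝ) (2 * π),
      (∫ s in (0:ℝ)..(2 * π), |Real.cos (s - t)| ^ lam *
          ‖(r : ℂ) - Complex.exp (Complex.I * s)‖ ^ (2 * q - 2)) ≤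
      (∫ s in (0:ℝ)..(2 * π), |Real.cos (s - t')| ^ lam *
          ‖(1 : ℂ) - Complex.exp (Complex.I * s)‖ ^ (2 * q - 2)) := by
  have hp : 0 ≤ 2 * q - 2 := by linarith
  have hcircle (s : ℝ) : circleMap 0 1 s = exp (I * s) := by simp [circleMap_zero, mul_comm]
  simp_rw [← hcircle]
  set g : ℝ → ℝ := fun τ ↦
    ∫ s in 0..2 * π, |Real.cos (s - τ)| ^ lam * ‖1 - circleMap 0 1 s‖ ^ (2 * q - 2)
  have hg : Continuous g :=
    intervalIntegral.continuous_parametric_intervalIntegral_of_continuous'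
      (by fun_prop (disch := exact fun _ ↦ .inr (by assumption))) _ _
  have hg_per : Periodic g (2 * π) := fun τ ↦ by
    simp only [g, sub_add_eq_sub_sub, Real.cos_sub_two_pi]
  obtain ⟨t', ht', hmax⟩ := hg_per.exists_mem_Icc_forall_le two_pi_pos hg
  refine ⟨t', ht', integral_mul_norm_sub_rpow_le
    (by fun_prop (disch := exact fun _ ↦ .inr hlam)) (fun s ↦ by positivity) (fun s ↦ ?_) hp
    (by simpa [abs_of_nonneg hr0]) fun u ↦ ?_⟩
  · rw [add_sub_right_comm, Real.cos_add_two_pi]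
  · simpa only [g, sub_sub_eq_add_sub] using hmax (t - u)
end

section
/- For 0 ≤ r < 1, the Möbius substitution e^{iθ} = (r - e^{is})/(1 - r e^{is}) satisfies dθ/ds = (1 - r²)/(1 + r² - 2r cos s); consequently, for any continuous function g on the unit circle, ∫_0^{2π} g((r - e^{is})/(1 - r e^{is})) (1 - r²)/(1 + r² - 2r cos s) ds = ∫_0^{2π} g(e^{iθ}) dθ. -/
/-!
Write `w s = 1 - r e^{is}`. Then `(r - e^{is}) / w s = -e^{is} · conj (w s) / w s`, and `|r| < 1`
keeps `w` in the right half-plane, so `θ s = π + s - 2 arg (w s)` is a smooth angle function for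
the Möbius map, with `θ' = 1 - 2 Im (w' / w) = (1 - r²) / |w|²`. Since `θ (s + 2π) = θ s + 2π`,
substituting `t = θ s` and using the `2π`-periodicity of `t ↦ g (e^{it})` gives the integral
identity.
-/

open Complex ComplexConjugate
open scoped Real

theorem HasDerivAt.carg {w : ℝ → ℂ} {w' : ℂ} {s : ℝ} (hw : HasDerivAt w w' s)
    (hs : w s ∈ slitPlane) : HasDerivAt (fun t => arg (w t)) ((w' / w s).im) s := by
  have h := imCLM.hasFDerivAt.comp_hasDerivAt s ((hasDerivAt_log hs).comp s hw)
  rw [imCLM_apply, inv_mul_eq_div] at h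
  exact h.congr_of_eventuallyEq (.of_forall fun t => (log_im (w t)).symm)

theorem Complex.exp_neg_two_arg_mul_I {z : ℂ} (hz : z ≠ 0) :
    exp (-(2 * arg z : ℝ) * I) = conj z / z := by
  have hexp : exp (-(2 * arg z : ℝ) * I) * exp (arg z * I) ^ 2 = 1 := by
    rw [← exp_nat_mul, ← exp_add]; push_cast; ring_nf; simp
  have hpolar := norm_mul_exp_arg_mul_I z
  have hconj : conj z * z = (‖z‖ : ℂ) ^ 2 := by rw [mul_comm, mul_conj']
  rw [eq_div_iff hz]
  apply mul_right_cancel₀ hz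
  linear_combination -exp (-(2 * arg z : ℝ) * I) * (z + ‖z‖ * exp (arg z * I)) * hpolar +
    (‖z‖ : ℂ) ^ 2 * hexp - hconj

theorem Complex.periodic_exp_I_mul_ofReal :
    Function.Periodic (fun t : ℝ => exp (I * t)) (2 * π) := fun t => by
  simpa [mul_comm I] using exp_mul_I_periodic (t : ℂ)

theorem Function.Periodic.intervalIntegral_comp_smul_deriv {E : Type*} [NormedAddCommGroup E]
    [NormedSpace ℝ E] {G : ℝ → E} {θ ρ : ℝ → ℝ} {a T : ℝ} (hG : Function.Periodic G T)
    (hGc : Continuous G) (hθ : ∀ s, HasDerivAt θ (ρ s) s) (hρ : Continuous ρ)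
    (hθT : θ (a + T) = θ a + T) :
    ∫ s in a..a + T, ρ s • G (θ s) = ∫ t in 0..T, G t := by
  calc ∫ s in a..a + T, ρ s • G (θ s) = ∫ t in θ a..θ a + T, G t := by
        rw [← hθT]
        exact intervalIntegral.integral_deriv_smul_comp (fun s _ => hθ s) hρ.continuousOn hGc
    _ = ∫ t in 0..T, G t := by simpa using hG.intervalIntegral_add_eq (θ a) 0

section Mobius

variable {r : ℝ}

theorem Complex.one_sub_ofReal_mul_exp_re (r s : ℝ) :
    (1 - r * exp (I * s)).re = 1 - r * Real.cos s := by
  simp [mul_comm I, exp_ofReal_mul_I_re]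

theorem Complex.one_sub_ofReal_mul_exp_mem_slitPlane (hr : |r| < 1) (s : ℝ) :
    1 - r * exp (I * s) ∈ slitPlane := by
  refine mem_slitPlane_iff.mpr (Or.inl ?_)
  rw [one_sub_ofReal_mul_exp_re]
  have hcos : r * Real.cos s ≤ |r| := by
    refine (le_abs_self _).trans ?_
    rw [abs_mul]
    exact mul_le_of_le_one_right (abs_nonneg r) (Real.abs_cos_le_one s)
  linarith [abs_lt.mp hr]

theorem Complex.normSq_one_sub_ofReal_mul_exp (r s : ℝ) :
    normSq (1 - r * exp (I * s)) = 1 + r ^ 2 - 2 * r * Real.cos s := by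
  rw [mul_comm I, exp_mul_I]
  simp only [← ofReal_cos, ← ofReal_sin, normSq_apply, sub_re, one_re, mul_re, ofReal_re, add_re,
    I_re, mul_zero, ofReal_im, I_im, mul_one, sub_self, add_zero, add_im, mul_im, zero_add, zero_mul,
    sub_zero, sub_im, one_im, zero_sub, mul_neg, neg_mul, neg_neg]
  linear_combination r ^ 2 * Real.sin_sq_add_cos_sq s

theorem Complex.hasDerivAt_one_sub_ofReal_mul_exp (r s : ℝ) :
    HasDerivAt (fun t : ℝ => 1 - r * exp (I * t)) (-(r * (I * exp (I * s)))) s := by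
  have h := ((hasDerivAt_id (s : ℂ)).const_mul I).cexp.comp_ofReal
  simp only [mul_one] at h
  simpa [mul_comm] using (h.const_mul (r : ℂ)).const_sub 1

theorem one_add_sq_sub_two_mul_cos_pos (hr : |r| < 1) (s : ℝ) :
    0 < 1 + r ^ 2 - 2 * r * Real.cos s := by
  rw [← normSq_one_sub_ofReal_mul_exp]
  exact normSq_pos.mpr (slitPlane_ne_zero (one_sub_ofReal_mul_exp_mem_slitPlane hr s))

noncomputable def mobiusAngle (r s : ℝ) : ℝ :=
  π + s - 2 * arg (1 - r * exp (I * s))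

theorem exp_I_mul_mobiusAngle (hr : |r| < 1) (s : ℝ) :
    exp (I * mobiusAngle r s) = (r - exp (I * s)) / (1 - r * exp (I * s)) := by
  have hw := slitPlane_ne_zero (one_sub_ofReal_mul_exp_mem_slitPlane hr s)
  have hsplit : I * (mobiusAngle r s : ℂ) =
      π * I + I * s + (-(2 * arg (1 - r * exp (I * s)) : ℝ)) * I := by
    simp only [mobiusAngle]; push_cast; ring
  have hconj : conj (1 - r * exp (I * s)) = 1 - r * (exp (I * s))⁻¹ := by
    simp [← exp_conj, ← exp_neg]
  rw [hsplit, exp_add, exp_add, exp_pi_mul_I, exp_neg_two_arg_mul_I hw, hconj]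
  field_simp
  ring

theorem hasDerivAt_mobiusAngle (hr : |r| < 1) (s : ℝ) :
    HasDerivAt (mobiusAngle r) ((1 - r ^ 2) / (1 + r ^ 2 - 2 * r * Real.cos s)) s := by
  have hw := one_sub_ofReal_mul_exp_mem_slitPlane hr s
  have h : HasDerivAt (fun t : ℝ => π + t - 2 * arg (1 - r * exp (I * t)))
      (1 - 2 * (-(r * (I * exp (I * s))) / (1 - r * exp (I * s))).im) s :=
    ((hasDerivAt_id' s).const_add π).sub
      (((hasDerivAt_one_sub_ofReal_mul_exp r s).carg hw).const_mul 2)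
  refine h.congr_deriv ?_
  have hD := (one_add_sq_sub_two_mul_cos_pos hr s).ne'
  rw [div_im, normSq_one_sub_ofReal_mul_exp]
  simp only [mul_comm I (s : ℂ), neg_im, mul_im, ofReal_re, I_re, exp_ofReal_mul_I_im, zero_mul,
    I_im, exp_ofReal_mul_I_re, one_mul, zero_add, ofReal_im, mul_re, zero_sub, mul_neg, neg_zero,
    add_zero, sub_re, one_re, sub_zero, neg_mul, neg_re, neg_neg, sub_im, one_im]
  field_simp
  linear_combination -2 * r ^ 2 * Real.sin_sq_add_cos_sq s

theorem mobiusAngle_add_two_pi (r s : ℝ) :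
    mobiusAngle r (s + 2 * π) = mobiusAngle r s + 2 * π := by
  simp only [mobiusAngle, periodic_exp_I_mul_ofReal s]
  ring

theorem hasDerivAt_mobius (hr : |r| < 1) (s : ℝ) :
    HasDerivAt (fun s : ℝ => (r - exp (I * s)) / (1 - r * exp (I * s)))
      (I * (((1 - r ^ 2) / (1 + r ^ 2 - 2 * r * Real.cos s) : ℝ) : ℂ) *
        ((r - exp (I * s)) / (1 - r * exp (I * s)))) s := by
  have h := ((hasDerivAt_mobiusAngle hr s).ofReal_comp.const_mul I).cexp
  simp_rw [exp_I_mul_mobiusAngle hr] at h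
  convert h using 1
  ring

end Mobius

open Real MeasureTheory intervalIntegral

theorem mobius_substitution (r : ℝ) (hr0 : 0 ≤ r) (hr1 : r < 1) :
    (∀ s : ℝ, HasDerivAt
        (fun s : ℝ => ((r : ℂ) - Complex.exp (Complex.I * s)) / (1 - r * Complex.exp (Complex.I * s)))
        (Complex.I * (((1 - r ^ 2) / (1 + r ^ 2 - 2 * r * Real.cos s) : ℝ) : ℂ) *
          (((r : ℂ) - Complex.exp (Complex.I * s)) / (1 - r * Complex.exp (Complex.I * s)))) s) ∧
    ∀ g : ℂ → ℂ, ContinuousOn g (Metric.sphere (0:ℂ) 1) →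
      (∫ s in (0:ℝ)..(2 * π),
          g (((r : ℂ) - Complex.exp (Complex.I * s)) / (1 - r * Complex.exp (Complex.I * s))) *
            (((1 - r ^ 2) / (1 + r ^ 2 - 2 * r * Real.cos s) : ℝ) : ℂ)) =
      ∫ θ in (0:ℝ)..(2 * π), g (Complex.exp (Complex.I * θ)) := by
  have hr : |r| < 1 := abs_lt.mpr ⟨by linarith, hr1⟩
  refine ⟨hasDerivAt_mobius hr, fun g hg => ?_⟩
  have hG : Continuous fun t : ℝ => g (Complex.exp (Complex.I * t)) :=
    hg.comp_continuous (by fun_prop) fun t => by simp [mul_comm Complex.I]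
  have hρ : Continuous fun s => (1 - r ^ 2) / (1 + r ^ 2 - 2 * r * Real.cos s) :=
    continuous_const.div (by fun_prop) fun s => (one_add_sq_sub_two_mul_cos_pos hr s).ne'
  simp_rw [← exp_I_mul_mobiusAngle hr, mul_comm (g _), ← Complex.real_smul]
  simpa using (periodic_exp_I_mul_ofReal.comp g).intervalIntegral_comp_smul_deriv hG
    (hasDerivAt_mobiusAngle hr) hρ (mobiusAngle_add_two_pi r 0)
end

section
/- For q > 1 and 0 ≤ r < 1, ∫_0^{π} (1 + r² - 2r cos s)^{q-1} ds = π · F(1-q, 1-q; 1; r²), where F is the Gauss hypergeometric function. -/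
/-!
By the binomial series, `(1 - r e^{is})^(q-1) = ∑ₙ C(q-1, n) (-r)ⁿ e^{ins}` with absolutely
summable coefficients, and its squared modulus is the integrand `(1 + r² - 2r cos s)^(q-1)`.
Parseval's identity on `[-π, π]` therefore gives `2π ∑ₙ C(q-1, n)² r²ⁿ`, and
`C(q-1, n)² = ((1-q)ₙ / n!)²` are exactly the coefficients of `F(1-q, 1-q; 1; r²)`.
The integrand is even, so the integral over `[0, π]` is half of that.
-/

open Real intervalIntegral

/-- The Gauss hypergeometric function `₂F₁(a, b; c; x)` as a power series. -/
noncomputable def gaussHypergeometric (a b c x : ℝ) : ℝ :=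
  ∑' n : ℕ, ((∏ k ∈ Finset.range n, (a + k)) * (∏ k ∈ Finset.range n, (b + k)) /
    ((∏ k ∈ Finset.range n, (c + k)) * (n.factorial : ℝ))) * x ^ n

open ComplexConjugate Finset

theorem Ring.factorial_mul_choose_eq_prod_range {K : Type*} [Field K] [CharZero K] (a : K)
    (n : ℕ) : (n.factorial : K) * Ring.choose a n = ∏ j ∈ range n, (a - j) := by
  rw [Ring.choose_eq_smul, smul_eq_mul,
    mul_inv_cancel_left₀ (Nat.cast_ne_zero.2 n.factorial_ne_zero),
    ← descPochhammer_eval_eq_prod_range, ← descPochhammer_map (Int.castRingHom K),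
    Polynomial.eval_map, ← Polynomial.eval₂_smulOneHom_eq_smeval]
  congr
  ext
  simp

theorem gaussHypergeometric_neg_neg_one (a x : ℝ) :
    gaussHypergeometric (-a) (-a) 1 x = ∑' n, Ring.choose a n ^ 2 * x ^ n := by
  unfold gaussHypergeometric
  congr 1 with n
  have hrising : ∏ k ∈ range n, (-a + k) = (-1) ^ n * (n.factorial * Ring.choose a n) := by
    rw [Ring.factorial_mul_choose_eq_prod_range]
    simpa [neg_add_eq_sub] using prod_neg (s := range n) fun j : ℕ => a - j
  have hfactorial : ∏ k ∈ range n, ((1 : ℝ) + k) = n.factorial := by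
    rw [← prod_range_add_one_eq_factorial]
    push_cast
    exact prod_congr rfl fun k _ => add_comm _ _
  have hfactorial_ne : (n.factorial : ℝ) ≠ 0 := by positivity
  rw [hrising, hfactorial]
  field_simp
  ring_nf
  simp

theorem mem_eball_zero_one_of_norm_lt_one {E : Type*} [SeminormedAddCommGroup E] {x : E}
    (hx : ‖x‖ < 1) : x ∈ Metric.eball (0 : E) 1 := by
  rwa [← ENNReal.ofReal_one, Metric.eball_ofReal, mem_ball_zero_iff]

theorem Complex.hasSum_choose_mul_pow {a x : ℂ} (hx : ‖x‖ < 1) :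
    HasSum (fun n => Ring.choose a n * x ^ n) ((1 + x) ^ a) := by
  simpa [binomialSeries, FormalMultilinearSeries.ofScalars_apply_eq, mul_comm] using
    Complex.one_add_cpow_hasFPowerSeriesOnBall_zero.hasSum (mem_eball_zero_one_of_norm_lt_one hx)

theorem Complex.summable_norm_choose_mul_pow {a x : ℂ} (hx : ‖x‖ < 1) :
    Summable fun n => ‖Ring.choose a n * x ^ n‖ := by
  have hmem : x ∈ Metric.eball (0 : ℂ) (binomialSeries ℂ a).radius :=
    Metric.eball_subset_eball binomialSeries_radius_ge_one (mem_eball_zero_one_of_norm_lt_one hx)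
  simpa [binomialSeries, FormalMultilinearSeries.ofScalars_apply_eq, mul_comm] using
    (binomialSeries ℂ a).summable_norm_apply hmem

theorem intervalIntegral.hasSum_integral_of_norm_le {ι E : Type*} [Countable ι]
    [NormedAddCommGroup E] [NormedSpace ℝ E] {F : ι → ℝ → E} {f : ℝ → E} {u : ι → ℝ} {a b : ℝ}
    (hF : ∀ n, Continuous (F n)) (hu : Summable u) (hFu : ∀ n t, ‖F n t‖ ≤ u n)
    (hf : ∀ t, HasSum (F · t) (f t)) :
    HasSum (fun n => ∫ t in a..b, F n t) (∫ t in a..b, f t) :=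
  hasSum_integral_of_dominated_convergence (fun n _ => u n) (fun n => (hF n).aestronglyMeasurable)
    (fun n => .of_forall fun t _ => hFu n t) (.of_forall fun _ _ => hu) intervalIntegrable_const
    (.of_forall fun t _ => hf t)

theorem integral_exp_int_mul_I (k : ℤ) :
    ∫ s in -π..π, Complex.exp (k * s * Complex.I) = if k = 0 then (2 * π : ℂ) else 0 := by
  split_ifs with hk
  · simp [hk]
    ring
  have hc : (k * Complex.I : ℂ) ≠ 0 := by simp [hk]
  -- `exp (k I s)` is `2π`-periodic, so its primitive takes the same value at `±π`
  have hperiodic : Complex.exp (k * Complex.I * π) = Complex.exp (k * Complex.I * ↑(-π)) := by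
    rw [show (k * Complex.I * π : ℂ) = k * Complex.I * ↑(-π) + k * (2 * π * Complex.I) by
      push_cast; ring, Complex.exp_add, Complex.exp_int_mul_two_pi_mul_I, mul_one]
  simp_rw [mul_right_comm _ _ Complex.I]
  rw [integral_exp_mul_complex hc, hperiodic, sub_self, zero_div]

theorem integral_conj_exp_mul_exp (m n : ℕ) :
    ∫ s in -π..π, conj (Complex.exp (n * s * Complex.I)) * Complex.exp (m * s * Complex.I) =
      if m = n then (2 * π : ℂ) else 0 := by
  have hexp (s : ℝ) : conj (Complex.exp (n * s * Complex.I)) * Complex.exp (m * s * Complex.I) =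
      Complex.exp (((m - n : ℤ) : ℂ) * s * Complex.I) := by
    rw [← Complex.exp_conj, ← Complex.exp_add]
    simp only [map_mul, map_natCast, Complex.conj_ofReal, Complex.conj_I]
    push_cast
    ring_nf
  simp_rw [hexp, integral_exp_int_mul_I, sub_eq_zero, Nat.cast_inj]

theorem norm_exp_natCast_mul_ofReal_mul_I (n : ℕ) (s : ℝ) :
    ‖Complex.exp (n * s * Complex.I)‖ = 1 := by
  rw [← Complex.ofReal_natCast, ← Complex.ofReal_mul, Complex.norm_exp_ofReal_mul_I]

section FourierSeries

variable {a : ℕ → ℂ} {f : ℝ → ℂ}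

theorem continuous_of_hasSum_fourier (ha : Summable (‖a ·‖))
    (hf : ∀ s : ℝ, HasSum (fun n => a n * Complex.exp (n * s * Complex.I)) (f s)) :
    Continuous f := by
  rw [show f = fun s : ℝ => ∑' n, a n * Complex.exp (n * s * Complex.I) from
    funext fun s => (hf s).tsum_eq.symm]
  exact continuous_tsum (by fun_prop) ha fun n s => by
    rw [norm_mul, norm_exp_natCast_mul_ofReal_mul_I, mul_one]

theorem integral_conj_exp_mul_of_hasSum_fourier (ha : Summable (‖a ·‖))
    (hf : ∀ s : ℝ, HasSum (fun n => a n * Complex.exp (n * s * Complex.I)) (f s)) (n : ℕ) :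
    ∫ s in -π..π, conj (Complex.exp (n * s * Complex.I)) * f s = 2 * π * a n := by
  have hsum := hasSum_integral_of_norm_le (a := -π) (b := π)
    (F := fun m s =>
      conj (Complex.exp (n * s * Complex.I)) * (a m * Complex.exp (m * s * Complex.I)))
    (f := fun s => conj (Complex.exp (n * s * Complex.I)) * f s)
    (fun m => (Complex.continuous_conj.comp (by fun_prop)).mul (by fun_prop)) ha
    (fun m s => by simp only [norm_mul, RCLike.norm_conj, norm_exp_natCast_mul_ofReal_mul_I,
      one_mul, mul_one, le_refl])
    fun s => (hf s).mul_left _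
  have hterm (m : ℕ) : ∫ s in -π..π,
      conj (Complex.exp (n * s * Complex.I)) * (a m * Complex.exp (m * s * Complex.I)) =
        if m = n then 2 * π * a n else 0 := by
    simp only [mul_left_comm _ (a m), integral_const_mul, integral_conj_exp_mul_exp]
    split_ifs with h
    · rw [h, mul_comm]
    · rw [mul_zero]
  simp_rw [hterm] at hsum
  exact hsum.unique (hasSum_ite_eq n _)

theorem hasSum_two_pi_mul_norm_sq_of_hasSum_fourier (ha : Summable (‖a ·‖))
    (hf : ∀ s : ℝ, HasSum (fun n => a n * Complex.exp (n * s * Complex.I)) (f s)) :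
    HasSum (fun n => 2 * π * ‖a n‖ ^ 2) (∫ s in -π..π, ‖f s‖ ^ 2) := by
  have hf_le (s : ℝ) : ‖f s‖ ≤ ∑' n, ‖a n‖ := (hf s).norm_le_of_bounded ha.hasSum fun n => by
    rw [norm_mul, norm_exp_natCast_mul_ofReal_mul_I, mul_one]
  have hsum := hasSum_integral_of_norm_le (a := -π) (b := π)
    (F := fun n s => conj (a n * Complex.exp (n * s * Complex.I)) * f s)
    (fun n => (Complex.continuous_conj.comp (by fun_prop)).mul
      (continuous_of_hasSum_fourier ha hf))
    (ha.mul_right (∑' n, ‖a n‖))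
    (fun n s => by
      rw [norm_mul, RCLike.norm_conj, norm_mul, norm_exp_natCast_mul_ofReal_mul_I, mul_one]
      exact mul_le_mul_of_nonneg_left (hf_le s) (norm_nonneg _))
    fun s => ((hf s).map (starRingEnd ℂ) Complex.continuous_conj).mul_right (f s)
  have hterm (n : ℕ) : conj (a n) * (2 * π * a n) = ((2 * π * ‖a n‖ ^ 2 : ℝ) : ℂ) := by
    rw [mul_left_comm, Complex.conj_mul']
    push_cast
    ring
  simp_rw [map_mul, mul_assoc (conj (a _)), integral_const_mul,
    integral_conj_exp_mul_of_hasSum_fourier ha hf, hterm, Complex.conj_mul', ← Complex.ofReal_pow,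
    integral_ofReal] at hsum
  exact Complex.hasSum_ofReal.1 hsum

end FourierSeries

theorem hasSum_one_sub_mul_exp_cpow (p : ℝ) {r : ℝ} (hr : |r| < 1) (s : ℝ) :
    HasSum (fun n => ((Ring.choose p n * (-r) ^ n : ℝ) : ℂ) * Complex.exp (n * s * Complex.I))
      ((1 - r * Complex.exp (s * Complex.I)) ^ (p : ℂ)) := by
  have hx : ‖-(r * Complex.exp (s * Complex.I))‖ < 1 := by
    simpa [Complex.norm_exp_ofReal_mul_I] using hr
  convert Complex.hasSum_choose_mul_pow (a := (p : ℂ)) hx using 1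
  · ext n
    rw [neg_mul_eq_neg_mul, mul_pow, ← Complex.exp_nat_mul]
    push_cast [Complex.ofReal_choose]
    ring_nf
  · rw [← sub_eq_add_neg]

theorem norm_one_sub_ofReal_mul_exp_sq (r s : ℝ) :
    ‖1 - r * Complex.exp (s * Complex.I)‖ ^ 2 = 1 + r ^ 2 - 2 * r * cos s := by
  rw [Complex.sq_norm, Complex.normSq_apply]
  simp only [Complex.sub_re, Complex.sub_im, Complex.one_re, Complex.one_im,
    Complex.re_ofReal_mul, Complex.im_ofReal_mul, Complex.exp_ofReal_mul_I_re,
    Complex.exp_ofReal_mul_I_im]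
  nlinarith [sin_sq_add_cos_sq s]

theorem hasSum_integral_one_add_sq_sub_two_mul_cos_rpow (p : ℝ) {r : ℝ} (hr : |r| < 1) :
    HasSum (fun n => 2 * π * (Ring.choose p n ^ 2 * (r ^ 2) ^ n))
      (∫ s in -π..π, (1 + r ^ 2 - 2 * r * cos s) ^ p) := by
  have hsummable : Summable fun n => ‖((Ring.choose p n * (-r) ^ n : ℝ) : ℂ)‖ := by
    simpa [Complex.ofReal_choose] using
      Complex.summable_norm_choose_mul_pow (a := (p : ℂ)) (x := -r) (by simpa using hr)
  have hcoeff (n : ℕ) :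
      ‖((Ring.choose p n * (-r) ^ n : ℝ) : ℂ)‖ ^ 2 = Ring.choose p n ^ 2 * (r ^ 2) ^ n := by
    rw [Complex.norm_real, Real.norm_eq_abs, sq_abs, mul_pow, ← pow_mul, mul_comm n, pow_mul,
      neg_sq]
  have hparseval :=
    hasSum_two_pi_mul_norm_sq_of_hasSum_fourier hsummable (hasSum_one_sub_mul_exp_cpow p hr)
  simpa only [Complex.norm_cpow_real, rpow_pow_comm (norm_nonneg _),
    norm_one_sub_ofReal_mul_exp_sq, hcoeff] using hparseval

theorem Function.Even.integral_neg_self_eq_two_mul {f : ℝ → ℝ} (hf : Function.Even f) {a : ℝ}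
    (hi : IntervalIntegrable f MeasureTheory.volume 0 a) :
    ∫ x in -a..a, f x = 2 * ∫ x in 0..a, f x := by
  have hi' : IntervalIntegrable f MeasureTheory.volume (-a) 0 := by
    simpa [hf _] using (hi.comp_sub_left 0).symm
  have hneg : ∫ x in -a..0, f x = ∫ x in 0..a, f x := by
    simpa [hf _] using (integral_comp_neg (a := 0) (b := a) f).symm
  rw [← integral_add_adjacent_intervals hi' hi, hneg, two_mul]

theorem integral_eq_hypergeometric_general (q r : ℝ) (hr0 : 0 ≤ r) (hr1 : r < 1) :
    (∫ s in (0:ℝ)..π, (1 + r ^ 2 - 2 * r * Real.cos s) ^ (q - 1)) =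
      π * gaussHypergeometric (1 - q) (1 - q) 1 (r ^ 2) := by
  have hcont : Continuous fun s => (1 + r ^ 2 - 2 * r * cos s) ^ (q - 1) :=
    -- the base is at least `(1 - r)² > 0`
    (by fun_prop : Continuous fun s => 1 + r ^ 2 - 2 * r * cos s).rpow_const fun s =>
      .inl (by nlinarith [mul_le_of_le_one_right hr0 (cos_le_one s)])
  have heven := Function.Even.integral_neg_self_eq_two_mul (fun s => by simp [cos_neg])
    (hcont.intervalIntegrable 0 π)
  have htotal :=
    (hasSum_integral_one_add_sq_sub_two_mul_cos_rpow (q - 1) (abs_lt.2 ⟨by linarith, hr1⟩)).tsum_eq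
  rw [tsum_mul_left, heven] at htotal
  rw [show 1 - q = -(q - 1) by ring, gaussHypergeometric_neg_neg_one]
  linarith

theorem integral_eq_hypergeometric (q r : ℝ) (hq : 1 < q) (hr0 : 0 ≤ r) (hr1 : r < 1) :
    (∫ s in (0:ℝ)..π, (1 + r ^ 2 - 2 * r * Real.cos s) ^ (q - 1)) =
      π * gaussHypergeometric (1 - q) (1 - q) 1 (r ^ 2) :=
  integral_eq_hypergeometric_general q r hr0 hr1
end

section
/- Let p > 1 and q = p/(p-1). Define c_p = 2^{(q-1)/q} π^{-1 + 1/(2q)} (Γ(q - 1/2)/Γ(q))^{1/q} and C_p for p ≥ 2 by C_p = (1/π)(∫_{-π}^{π} |sin s|^q (2 - 2cos s)^{q-1} ds)^{1/q}, and for 1 < p < 2 by C_p = (1/π)(∫_{-π}^{π} |cos s|^q (2 - 2cos s)^{q-1} ds)^{1/q}. Then c_p < C_p < 2 c_p. -/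
/-!
Let `W a = ∫₀^{π/2} sin^a` be the Wallis integral and `K = W (2q - 2)`. Substituting
`x = sin² u` turns `W` into a Beta integral, which gives `c_p = 2 K^{1/q} / π`. Substituting
`s = 2u` gives `C_p = 4 T^{1/q} / π` with `T = ∫₀^{π/2} w(2u) sin^{2q-2} u`, where
`w = |sin|^q` for `p ≥ 2` and `w = |cos|^q` for `p < 2`. So the claim is `K < 2^q T` and
`T < K`; the second holds since `w ≤ 1`. For the first, the reflection `u ↦ π/2 - u` gives
`2T = ∫₀^{π/2} w(2u) (sin^{2q-2} u + cos^{2q-2} u)`. When `q ≤ 2`, AM-GM bounds the bracket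
below by `2^{2-q} |sin 2u|^{q-1}`, which reduces the claim to `K < 2 W (2q - 1)`, a consequence
of `2q W (2q) = (2q - 1) K`. When `q > 2`, the larger of `sin² u` and `cos² u` is at least `1/2`,
so the bracket is at least `2^{1-q}`, which reduces the claim to `K < W q`.
-/

open Real intervalIntegral Set

noncomputable def wallisIntegral (a : ℝ) : ℝ := ∫ u in (0:ℝ)..(π / 2), sin u ^ a

lemma integral_rpow_mul_one_sub_rpow {a b : ℝ} (ha : 0 < a) (hb : 0 < b) :
    ∫ x in (0:ℝ)..1, x ^ (a - 1) * (1 - x) ^ (b - 1) = Gamma a * Gamma b / Gamma (a + b) := by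
  have hB := Complex.betaIntegral_eq_Gamma_mul_div a b (by simpa using ha) (by simpa using hb)
  have hint : Complex.betaIntegral a b
      = ((∫ x in (0:ℝ)..1, x ^ (a - 1) * (1 - x) ^ (b - 1) : ℝ) : ℂ) := by
    rw [Complex.betaIntegral, ← intervalIntegral.integral_ofReal]
    refine integral_congr fun x hx => ?_
    rw [uIcc_of_le zero_le_one] at hx
    rw [Complex.ofReal_mul, Complex.ofReal_cpow hx.1, Complex.ofReal_cpow (sub_nonneg.2 hx.2)]
    push_cast
    rfl
  rw [hint, ← Complex.ofReal_add, Complex.Gamma_ofReal, Complex.Gamma_ofReal,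
    Complex.Gamma_ofReal] at hB
  exact_mod_cast hB

lemma wallisIntegral_eq_Gamma {a : ℝ} (ha : -1 < a) :
    wallisIntegral a = √π * Gamma ((a + 1) / 2) / (2 * Gamma (a / 2 + 1)) := by
  -- `g` is singular at `0` and `1`, so only the monotone change of variables applies, and the
  -- integrands agree only on the open interval (at `π / 2` the left one is `1`).
  let g : ℝ → ℝ := fun x => 2⁻¹ * (x ^ ((a + 1) / 2 - 1) * (1 - x) ^ ((1:ℝ) / 2 - 1))
  have hsubst : ∫ u in (0:ℝ)..(π / 2), (2 * sin u * cos u) • (g ∘ fun u => sin u ^ 2) u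
      = ∫ x in (0:ℝ)..1, g x := by
    have hderiv (u : ℝ) : HasDerivAt (fun u => sin u ^ 2) (2 * sin u * cos u) u :=
      ((hasDerivAt_sin u).fun_pow 2).congr_deriv (by ring)
    have := integral_deriv_smul_comp_of_deriv_nonneg (g := g) (a := 0) (b := π / 2) (by fun_prop)
      (fun u _ => hderiv u)
      (fun u hu => by
        rw [min_eq_left (by positivity), max_eq_right (by positivity)] at hu
        have := sin_pos_of_pos_of_lt_pi hu.1 (by linarith [pi_pos, hu.2])
        have := cos_pos_of_mem_Ioo ⟨by linarith [pi_pos, hu.1], hu.2⟩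
        positivity)
    simpa using this
  have hcongr : EqOn (fun u => sin u ^ a)
      (fun u => (2 * sin u * cos u) • (g ∘ fun u => sin u ^ 2) u) (Ioo 0 (π / 2)) := by
    intro u hu
    have hs := sin_pos_of_pos_of_lt_pi hu.1 (by linarith [pi_pos, hu.2])
    have hc := cos_pos_of_mem_Ioo ⟨by linarith [pi_pos, hu.1], hu.2⟩
    have h1 : (sin u ^ 2) ^ ((a + 1) / 2 - 1) = sin u ^ a / sin u := by
      rw [← rpow_two, ← rpow_mul hs.le, ← rpow_sub_one hs.ne']; ring_nf
    have h2 : (1 - sin u ^ 2) ^ ((1:ℝ) / 2 - 1) = (cos u)⁻¹ := by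
      rw [← cos_sq', ← rpow_two, ← rpow_mul hc.le, ← rpow_neg_one]; norm_num
    simp only [g, Function.comp, smul_eq_mul, h1, h2]
    field_simp
  rw [wallisIntegral, integral_congr_Ioo_of_le (by positivity) hcongr, hsubst,
    integral_const_mul, integral_rpow_mul_one_sub_rpow (by linarith) one_half_pos,
    Gamma_one_half_eq, show (a + 1) / 2 + 1 / 2 = a / 2 + 1 by ring]
  ring

lemma wallisIntegral_pos {a : ℝ} (ha : -1 < a) : 0 < wallisIntegral a := by
  rw [wallisIntegral_eq_Gamma ha]
  have := Gamma_pos_of_pos (show 0 < (a + 1) / 2 by linarith)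
  have := Gamma_pos_of_pos (show 0 < a / 2 + 1 by linarith)
  positivity

lemma wallisIntegral_add_two {a : ℝ} (ha : -1 < a) :
    (a + 2) * wallisIntegral (a + 2) = (a + 1) * wallisIntegral a := by
  rw [wallisIntegral_eq_Gamma ha, wallisIntegral_eq_Gamma (by linarith),
    show (a + 2 + 1) / 2 = (a + 1) / 2 + 1 by ring, show (a + 2) / 2 + 1 = a / 2 + 1 + 1 by ring,
    Gamma_add_one (by linarith), Gamma_add_one (by linarith)]
  have := Gamma_pos_of_pos (show 0 < a / 2 + 1 by linarith)
  have : a + 2 ≠ 0 := by linarith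
  field_simp

lemma wallisIntegral_lt_of_lt {b c : ℝ} (hb : 0 ≤ b) (hbc : b < c) :
    wallisIntegral c < wallisIntegral b := by
  refine integral_lt_integral_of_continuousOn_of_le_of_exists_lt (by positivity)
    (Continuous.continuousOn (by fun_prop (disch := linarith)))
    (Continuous.continuousOn (by fun_prop (disch := linarith)))
    (fun u hu => rpow_le_rpow_of_exponent_ge' (sin_nonneg_of_nonneg_of_le_pi hu.1.le
      (by linarith [pi_pos, hu.2])) (sin_le_one u) hb hbc.le)
    ⟨π / 6, ⟨by positivity, by linarith [pi_pos]⟩, ?_⟩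
  rw [sin_pi_div_six]
  exact rpow_lt_rpow_of_exponent_gt (by norm_num) (by norm_num) hbc

lemma cp_eq_wallisIntegral {q : ℝ} (hq : 1 / 2 < q) :
    2 ^ ((q - 1) / q) * π ^ (-1 + 1 / (2 * q)) * (Gamma (q - 1 / 2) / Gamma q) ^ (1 / q)
      = 2 * wallisIntegral (2 * q - 2) ^ (1 / q) / π := by
  have hGq := Gamma_pos_of_pos (show 0 < q by linarith)
  have hK := wallisIntegral_pos (show -1 < 2 * q - 2 by linarith)
  have hratio :
      Gamma (q - 1 / 2) / Gamma q = 2 * wallisIntegral (2 * q - 2) * π ^ (-(1 / 2) : ℝ) := by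
    rw [wallisIntegral_eq_Gamma (by linarith), show (2 * q - 2 + 1) / 2 = q - 1 / 2 by ring,
      show (2 * q - 2) / 2 + 1 = q by ring, rpow_neg pi_pos.le, ← sqrt_eq_rpow]
    have := sqrt_pos.2 pi_pos
    field_simp
  rw [hratio, mul_rpow (by positivity) (by positivity), mul_rpow (by positivity) hK.le,
    ← rpow_mul pi_pos.le]
  calc _ = (2 : ℝ) ^ ((q - 1) / q + 1 / q) * π ^ (-1 + 1 / (2 * q) + -(1 / 2) * (1 / q))
        * wallisIntegral (2 * q - 2) ^ (1 / q) := by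
        rw [rpow_add two_pos ((q - 1) / q), rpow_add pi_pos (-1 + 1 / (2 * q))]; ring
    _ = _ := by
      rw [show (q - 1) / q + 1 / q = 1 by field_simp; ring,
        show -1 + 1 / (2 * q) + -(1 / 2) * (1 / q) = -1 by field_simp; ring, rpow_one, rpow_neg_one]
      ring

lemma integral_zero_pi_div_two_comp_two_mul (F : ℝ → ℝ) :
    ∫ u in (0:ℝ)..(π / 2), F (2 * u) = 2⁻¹ * ∫ x in (0:ℝ)..π, F x := by
  rw [integral_comp_mul_left F two_ne_zero, smul_eq_mul, mul_zero, mul_div_cancel₀ _ two_ne_zero]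

lemma Function.Even.integral_neg_pi_pi {F : ℝ → ℝ} (hF : F.Even) (hc : Continuous F) :
    ∫ x in (-π)..π, F x = 2 * ∫ x in (0:ℝ)..π, F x := by
  rw [← integral_add_adjacent_intervals (hc.intervalIntegrable (-π) 0)
    (hc.intervalIntegrable 0 π), ← neg_zero, ← integral_comp_neg, neg_zero]
  simp only [hF.eq]
  ring

lemma integral_comp_two_mul_of_symm {w : ℝ → ℝ} (hw : ∀ x, w (π - x) = w x)
    (hc : Continuous w) :
    ∫ u in (0:ℝ)..(π / 2), w (2 * u) = ∫ x in (0:ℝ)..(π / 2), w x := by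
  have hreflect : ∫ x in (π / 2)..π, w x = ∫ x in (0:ℝ)..(π / 2), w x := by
    simpa [hw, show π - π / 2 = π / 2 by ring] using
      (integral_comp_sub_left (a := 0) (b := π / 2) w π).symm
  rw [integral_zero_pi_div_two_comp_two_mul,
    ← integral_add_adjacent_intervals (hc.intervalIntegrable 0 (π / 2))
      (hc.intervalIntegrable (π / 2) π), hreflect]
  ring

lemma integral_comp_two_mul_mul_sin_rpow_eq_cos {w : ℝ → ℝ} (hw : ∀ x, w (π - x) = w x)
    (a : ℝ) :
    ∫ u in (0:ℝ)..(π / 2), w (2 * u) * sin u ^ a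
      = ∫ u in (0:ℝ)..(π / 2), w (2 * u) * cos u ^ a := by
  have := integral_comp_sub_left (a := 0) (b := π / 2) (fun u => w (2 * u) * sin u ^ a) (π / 2)
  simp only [sub_zero, sub_self, sin_pi_div_two_sub, mul_sub, show 2 * (π / 2) = π by ring,
    hw] at this
  exact this.symm

lemma two_mul_integral_comp_two_mul_mul_sin_rpow {w : ℝ → ℝ} (hw : ∀ x, w (π - x) = w x)
    (hc : Continuous w) {a : ℝ} (ha : 0 ≤ a) :
    2 * ∫ u in (0:ℝ)..(π / 2), w (2 * u) * sin u ^ a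
      = ∫ u in (0:ℝ)..(π / 2), w (2 * u) * (sin u ^ a + cos u ^ a) := by
  simp only [mul_add]
  rw [integral_add (Continuous.intervalIntegrable (by fun_prop (disch := linarith)) _ _)
    (Continuous.intervalIntegrable (by fun_prop (disch := linarith)) _ _),
    ← integral_comp_two_mul_mul_sin_rpow_eq_cos hw a]
  ring

lemma sin_nonneg_and_cos_nonneg_of_mem_Icc {u : ℝ} (hu : u ∈ Icc 0 (π / 2)) :
    0 ≤ sin u ∧ 0 ≤ cos u :=
  ⟨sin_nonneg_of_nonneg_of_le_pi hu.1 (by linarith [pi_pos, hu.2]),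
    cos_nonneg_of_mem_Icc ⟨by linarith [pi_pos, hu.1], hu.2⟩⟩

lemma integral_abs_sin_rpow (b : ℝ) :
    ∫ x in (0:ℝ)..(π / 2), |sin x| ^ b = wallisIntegral b := by
  refine integral_congr fun x hx => ?_
  rw [uIcc_of_le (by positivity)] at hx
  simp only [abs_of_nonneg (sin_nonneg_and_cos_nonneg_of_mem_Icc hx).1]

lemma integral_abs_sin_two_mul_rpow {b : ℝ} (hb : 0 ≤ b) :
    ∫ u in (0:ℝ)..(π / 2), |sin (2 * u)| ^ b = wallisIntegral b := by
  rw [integral_comp_two_mul_of_symm (w := fun x => |sin x| ^ b) (fun x => by rw [sin_pi_sub])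
    (by fun_prop (disch := linarith)), integral_abs_sin_rpow]

lemma integral_abs_cos_two_mul_rpow {b : ℝ} (hb : 0 ≤ b) :
    ∫ u in (0:ℝ)..(π / 2), |cos (2 * u)| ^ b = wallisIntegral b := by
  rw [integral_comp_two_mul_of_symm (w := fun x => |cos x| ^ b)
    (fun x => by rw [cos_pi_sub, abs_neg])
    (by fun_prop (disch := linarith)), ← integral_abs_sin_rpow]
  simpa [cos_pi_div_two_sub] using
    (integral_comp_sub_left (a := 0) (b := π / 2) (fun x => |cos x| ^ b) (π / 2)).symm

lemma two_mul_mul_rpow_le_rpow_add_rpow {x y : ℝ} (hx : 0 ≤ x) (hy : 0 ≤ y) (r : ℝ) :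
    2 * (x * y) ^ r ≤ x ^ (2 * r) + y ^ (2 * r) := by
  rw [mul_rpow hx hy, mul_comm 2 r, rpow_mul hx, rpow_mul hy, rpow_two, rpow_two, ← mul_assoc]
  exact two_mul_le_add_sq _ _

lemma one_le_two_rpow_mul_rpow_add_rpow {x y : ℝ} (hx : 0 ≤ x) (hy : 0 ≤ y)
    (hxy : x ^ 2 + y ^ 2 = 1) {r : ℝ} (hr : 0 ≤ r) :
    1 ≤ 2 ^ r * (x ^ (2 * r) + y ^ (2 * r)) := by
  have key (z : ℝ) (hz : 0 ≤ z) (hz2 : 1 / 2 ≤ z ^ 2) : 1 ≤ 2 ^ r * z ^ (2 * r) := by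
    rw [rpow_mul hz, rpow_two, ← mul_rpow zero_le_two (sq_nonneg z)]
    exact one_le_rpow (by linarith) hr
  have := rpow_nonneg hx (2 * r)
  have := rpow_nonneg hy (2 * r)
  have := rpow_pos_of_pos two_pos r
  rcases le_total (1 / 2) (x ^ 2) with h | h
  · nlinarith [key x hx h]
  · nlinarith [key y hy (by linarith)]

lemma four_mul_abs_sin_two_mul_rpow_le {q u : ℝ} (hq : 1 ≤ q) (hu : u ∈ Icc 0 (π / 2)) :
    4 * |sin (2 * u)| ^ (2 * q - 1)
      ≤ 2 ^ q * (|sin (2 * u)| ^ q * (sin u ^ (2 * q - 2) + cos u ^ (2 * q - 2))) := by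
  obtain ⟨hs, hc⟩ := sin_nonneg_and_cos_nonneg_of_mem_Icc hu
  have hsplit : |sin (2 * u)| ^ (2 * q - 1) = |sin (2 * u)| ^ q * |sin (2 * u)| ^ (q - 1) := by
    rw [← rpow_add' (abs_nonneg _) (by linarith)]; ring_nf
  have hdouble : |sin (2 * u)| ^ (q - 1) = 2 ^ (q - 1) * (sin u * cos u) ^ (q - 1) := by
    rw [sin_two_mul, abs_of_nonneg (by positivity), mul_assoc, mul_rpow zero_le_two (by positivity)]
  have hamgm := two_mul_mul_rpow_le_rpow_add_rpow hs hc (q - 1)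
  rw [show 2 * (q - 1) = 2 * q - 2 by ring] at hamgm
  calc 4 * |sin (2 * u)| ^ (2 * q - 1)
      = 2 ^ q * |sin (2 * u)| ^ q * (2 * (sin u * cos u) ^ (q - 1)) := by
        rw [hsplit, hdouble, rpow_sub_one two_ne_zero]; ring
    _ ≤ 2 ^ q * |sin (2 * u)| ^ q * (sin u ^ (2 * q - 2) + cos u ^ (2 * q - 2)) :=
        mul_le_mul_of_nonneg_left hamgm (by positivity)
    _ = _ := by ring

lemma two_mul_abs_cos_two_mul_rpow_le {q u : ℝ} (hq : 1 ≤ q) (hu : u ∈ Icc 0 (π / 2)) :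
    2 * |cos (2 * u)| ^ q
      ≤ 2 ^ q * (|cos (2 * u)| ^ q * (sin u ^ (2 * q - 2) + cos u ^ (2 * q - 2))) := by
  obtain ⟨hs, hc⟩ := sin_nonneg_and_cos_nonneg_of_mem_Icc hu
  have hmean := one_le_two_rpow_mul_rpow_add_rpow hs hc (sin_sq_add_cos_sq u) (sub_nonneg.2 hq)
  rw [show 2 * (q - 1) = 2 * q - 2 by ring] at hmean
  calc 2 * |cos (2 * u)| ^ q = 2 * |cos (2 * u)| ^ q * 1 := (mul_one _).symm
    _ ≤ 2 * |cos (2 * u)| ^ q * (2 ^ (q - 1) * (sin u ^ (2 * q - 2) + cos u ^ (2 * q - 2))) :=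
        mul_le_mul_of_nonneg_left hmean (by positivity)
    _ = _ := by rw [rpow_sub_one two_ne_zero]; ring

lemma wallisIntegral_lt_two_rpow_mul_integral_abs_sin {q : ℝ} (hq : 1 ≤ q) :
    wallisIntegral (2 * q - 2)
      < 2 ^ q * ∫ u in (0:ℝ)..(π / 2), |sin (2 * u)| ^ q * sin u ^ (2 * q - 2) := by
  have hw : Continuous fun x => |sin x| ^ q := by fun_prop (disch := linarith)
  have hsymm := two_mul_integral_comp_two_mul_mul_sin_rpow (w := fun x => |sin x| ^ q)
    (fun x => by rw [sin_pi_sub]) hw (a := 2 * q - 2) (by linarith)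
  have hmono : 4 * wallisIntegral (2 * q - 1)
      ≤ 2 ^ q * (2 * ∫ u in (0:ℝ)..(π / 2), |sin (2 * u)| ^ q * sin u ^ (2 * q - 2)) := by
    rw [← integral_abs_sin_two_mul_rpow (by linarith), hsymm, ← integral_const_mul,
      ← integral_const_mul]
    refine integral_mono_on (by positivity)
      (Continuous.intervalIntegrable (by fun_prop (disch := linarith)) _ _)
      (Continuous.intervalIntegrable (by fun_prop (disch := linarith)) _ _)
      fun u hu => four_mul_abs_sin_two_mul_rpow_le hq hu
  have hrec := wallisIntegral_add_two (a := 2 * q - 2) (by linarith)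
  rw [show 2 * q - 2 + 2 = 2 * q by ring, show 2 * q - 2 + 1 = 2 * q - 1 by ring] at hrec
  have hlt := wallisIntegral_lt_of_lt (b := 2 * q - 1) (c := 2 * q) (by linarith) (by linarith)
  have hK := wallisIntegral_pos (a := 2 * q - 2) (by linarith)
  nlinarith [mul_nonneg (sub_nonneg.2 hq) hK.le]

lemma wallisIntegral_lt_two_rpow_mul_integral_abs_cos {q : ℝ} (hq : 2 < q) :
    wallisIntegral (2 * q - 2)
      < 2 ^ q * ∫ u in (0:ℝ)..(π / 2), |cos (2 * u)| ^ q * sin u ^ (2 * q - 2) := by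
  have hw : Continuous fun x => |cos x| ^ q := by fun_prop (disch := linarith)
  have hsymm := two_mul_integral_comp_two_mul_mul_sin_rpow (w := fun x => |cos x| ^ q)
    (fun x => by rw [cos_pi_sub, abs_neg]) hw (a := 2 * q - 2) (by linarith)
  have hmono : 2 * wallisIntegral q
      ≤ 2 ^ q * (2 * ∫ u in (0:ℝ)..(π / 2), |cos (2 * u)| ^ q * sin u ^ (2 * q - 2)) := by
    rw [← integral_abs_cos_two_mul_rpow (by linarith), hsymm, ← integral_const_mul,
      ← integral_const_mul]
    refine integral_mono_on (by positivity)
      (Continuous.intervalIntegrable (by fun_prop (disch := linarith)) _ _)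
      (Continuous.intervalIntegrable (by fun_prop (disch := linarith)) _ _)
      fun u hu => two_mul_abs_cos_two_mul_rpow_le (by linarith) hu
  linarith [wallisIntegral_lt_of_lt (b := q) (c := 2 * q - 2) (by linarith) (by linarith)]

lemma integral_abs_comp_two_mul_rpow_mul_sin_rpow_lt_wallisIntegral {f : ℝ → ℝ}
    (hf : Continuous f) (hf1 : ∀ x, |f x| ≤ 1) (hf3 : |f (π / 3)| < 1) {q a : ℝ} (hq : 0 < q)
    (ha : 0 ≤ a) :
    ∫ u in (0:ℝ)..(π / 2), |f (2 * u)| ^ q * sin u ^ a < wallisIntegral a := by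
  refine integral_lt_integral_of_continuousOn_of_le_of_exists_lt (by positivity)
    (Continuous.continuousOn (by fun_prop (disch := linarith)))
    (Continuous.continuousOn (by fun_prop (disch := linarith))) (fun u hu => ?_)
    ⟨π / 6, ⟨by positivity, by linarith [pi_pos]⟩, ?_⟩
  · exact mul_le_of_le_one_left (rpow_nonneg (sin_nonneg_and_cos_nonneg_of_mem_Icc
      (Ioc_subset_Icc_self hu)).1 _) (rpow_le_one (abs_nonneg _) (hf1 _) hq.le)
  · rw [show 2 * (π / 6) = π / 3 by ring, sin_pi_div_six]
    exact mul_lt_of_lt_one_left (by positivity) (rpow_lt_one (abs_nonneg _) hf3 hq)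

lemma integral_mul_two_sub_two_mul_cos_rpow {h : ℝ → ℝ} (hc : Continuous h) (heven : h.Even)
    {q : ℝ} (hq : 1 ≤ q) :
    ∫ s in (-π)..π, h s * (2 - 2 * cos s) ^ (q - 1)
      = 4 ^ q * ∫ u in (0:ℝ)..(π / 2), h (2 * u) * sin u ^ (2 * q - 2) := by
  have hF : Function.Even fun s => h s * (2 - 2 * cos s) ^ (q - 1) := fun s => by
    simp only [heven.eq, cos_neg]
  have hcongr : EqOn (fun u => h (2 * u) * (2 - 2 * cos (2 * u)) ^ (q - 1))
      (fun u => 4 ^ (q - 1) * (h (2 * u) * sin u ^ (2 * q - 2))) (uIcc 0 (π / 2)) := by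
    intro u hu
    rw [uIcc_of_le (by positivity)] at hu
    have hs := (sin_nonneg_and_cos_nonneg_of_mem_Icc hu).1
    dsimp only
    rw [cos_two_mul, cos_sq', show 2 - 2 * (2 * (1 - sin u ^ 2) - 1) = 4 * sin u ^ 2 by ring,
      mul_rpow (by norm_num) (sq_nonneg _), ← rpow_two, ← rpow_mul hs,
      show 2 * (q - 1) = 2 * q - 2 by ring]
    ring
  calc _ = 2 * ∫ s in (0:ℝ)..π, h s * (2 - 2 * cos s) ^ (q - 1) :=
        hF.integral_neg_pi_pi (by fun_prop (disch := linarith))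
    _ = 4 * ∫ u in (0:ℝ)..(π / 2), h (2 * u) * (2 - 2 * cos (2 * u)) ^ (q - 1) := by
        rw [integral_zero_pi_div_two_comp_two_mul fun s => h s * (2 - 2 * cos s) ^ (q - 1)]
        ring
    _ = _ := by
        rw [integral_congr hcongr, integral_const_mul, rpow_sub_one four_ne_zero]; ring

lemma rpow_mul_rpow_one_div {c x q : ℝ} (hc : 0 ≤ c) (hx : 0 ≤ x) (hq : q ≠ 0) :
    (c ^ q * x) ^ (1 / q) = c * x ^ (1 / q) := by
  rw [mul_rpow (rpow_nonneg hc q) hx, ← rpow_mul hc, mul_one_div_cancel hq, rpow_one]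

lemma cp_lt_and_lt_two_mul_of_bounds {q : ℝ} (hq : 1 ≤ q) {h : ℝ → ℝ} (hc : Continuous h)
    (heven : h.Even)
    (hlower : wallisIntegral (2 * q - 2)
      < 2 ^ q * ∫ u in (0:ℝ)..(π / 2), h (2 * u) * sin u ^ (2 * q - 2))
    (hupper : ∫ u in (0:ℝ)..(π / 2), h (2 * u) * sin u ^ (2 * q - 2)
      < wallisIntegral (2 * q - 2)) :
    2 * wallisIntegral (2 * q - 2) ^ (1 / q) / π
        < 1 / π * (∫ s in (-π)..π, h s * (2 - 2 * cos s) ^ (q - 1)) ^ (1 / q) ∧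
      1 / π * (∫ s in (-π)..π, h s * (2 - 2 * cos s) ^ (q - 1)) ^ (1 / q)
        < 2 * (2 * wallisIntegral (2 * q - 2) ^ (1 / q) / π) := by
  rw [integral_mul_two_sub_two_mul_cos_rpow hc heven hq]
  set T := ∫ u in (0:ℝ)..(π / 2), h (2 * u) * sin u ^ (2 * q - 2)
  set K := wallisIntegral (2 * q - 2)
  have hK : 0 < K := wallisIntegral_pos (by linarith)
  have hT : 0 < T := pos_of_mul_pos_right (hK.trans hlower) (by positivity)
  have hq0 : q ≠ 0 := by positivity
  have hlo : K ^ (1 / q) < 2 * T ^ (1 / q) := by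
    rw [← rpow_mul_rpow_one_div zero_le_two hT.le hq0]
    exact rpow_lt_rpow hK.le hlower (by positivity)
  have hhi : T ^ (1 / q) < K ^ (1 / q) := rpow_lt_rpow hT.le hupper (by positivity)
  rw [rpow_mul_rpow_one_div (by norm_num) hT.le hq0]
  have := pi_pos
  constructor
  · field_simp
    linarith
  · field_simp
    linarith

theorem cp_lt_Cp_lt_two_cp (p q : ℝ) (hp : 1 < p) (hq : q = p / (p - 1)) :
    let cp : ℝ := 2 ^ ((q - 1) / q) * π ^ (-1 + 1 / (2 * q)) *
      (Real.Gamma (q - 1 / 2) / Real.Gamma q) ^ (1 / q)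
    let Cp : ℝ :=
      if 2 ≤ p then
        (1 / π) * (∫ s in (-π)..π, |Real.sin s| ^ q * (2 - 2 * Real.cos s) ^ (q - 1)) ^ (1 / q)
      else
        (1 / π) * (∫ s in (-π)..π, |Real.cos s| ^ q * (2 - 2 * Real.cos s) ^ (q - 1)) ^ (1 / q)
    cp < Cp ∧ Cp < 2 * cp := by
  intro cp Cp
  have hp1 : 0 < p - 1 := by linarith
  have hq1 : 1 < q := by rw [hq, one_lt_div hp1]; linarith
  simp only [cp, Cp, cp_eq_wallisIntegral (show 1 / 2 < q by linarith)]
  split_ifs with hp2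
  · refine cp_lt_and_lt_two_mul_of_bounds hq1.le (h := fun s => |sin s| ^ q)
      (by fun_prop (disch := linarith)) (fun s => by simp only [sin_neg, abs_neg])
      (wallisIntegral_lt_two_rpow_mul_integral_abs_sin hq1.le)
      (integral_abs_comp_two_mul_rpow_mul_sin_rpow_lt_wallisIntegral continuous_sin
        abs_sin_le_one ?_ (by linarith) (by linarith))
    rw [sin_pi_div_three, abs_of_pos (by positivity)]
    nlinarith [sq_sqrt (show (0:ℝ) ≤ 3 by norm_num)]
  · have hq2 : 2 < q := by rw [hq, lt_div_iff₀ hp1]; linarith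
    refine cp_lt_and_lt_two_mul_of_bounds hq1.le (h := fun s => |cos s| ^ q)
      (by fun_prop (disch := linarith)) (fun s => by simp only [cos_neg])
      (wallisIntegral_lt_two_rpow_mul_integral_abs_cos hq2)
      (integral_abs_comp_two_mul_rpow_mul_sin_rpow_lt_wallisIntegral continuous_cos
        abs_cos_le_one ?_ (by linarith) (by linarith))
    rw [cos_pi_div_three]
    norm_num
end

section
/- For all q > 1 and 0 ≤ r < 1, (2π)^{1-q} F(1-q, 1-q; 1; r²) < 1 + (q-1)² r², where F is the Gauss hypergeometric function. -/
open Real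

section HypergeometricAux

open Finset Filter Topology

/-- `b_n`: coefficients of `(1-x)^c` up to sign. -/
noncomputable def bbAux (c : ℝ) (n : ℕ) : ℝ := ∏ j ∈ Finset.range n, (((j : ℝ) - c) / ((j : ℝ) + 1))
/-- `Q_n`: coefficients of `(1-x)^{-(2c+1)}`. -/
noncomputable def QAux (c : ℝ) (n : ℕ) : ℝ := ∏ j ∈ Finset.range n, (((j : ℝ) + 1 + 2*c) / ((j : ℝ) + 1))
/-- `P_n`: coefficients of `(1-x)^{-(c+1)}`. -/
noncomputable def PAux (c : ℝ) (n : ℕ) : ℝ := ∏ j ∈ Finset.range n, (((j : ℝ) + 1 + c) / ((j : ℝ) + 1))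

lemma bbAux_succ (c : ℝ) (n : ℕ) :
    bbAux c (n+1) = bbAux c n * (((n : ℝ) - c) / ((n : ℝ) + 1)) := Finset.prod_range_succ _ _

lemma QAux_succ (c : ℝ) (n : ℕ) :
    QAux c (n+1) = QAux c n * (((n : ℝ) + 1 + 2*c) / ((n : ℝ) + 1)) := Finset.prod_range_succ _ _

lemma PAux_succ (c : ℝ) (n : ℕ) :
    PAux c (n+1) = PAux c n * (((n : ℝ) + 1 + c) / ((n : ℝ) + 1)) := Finset.prod_range_succ _ _

lemma QAux_pos {c : ℝ} (hc : 0 < c) (n : ℕ) : 0 < QAux c n := by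
  refine Finset.prod_pos fun j _ => ?_
  positivity

lemma PAux_pos {c : ℝ} (hc : 0 < c) (n : ℕ) : 0 < PAux c n := by
  refine Finset.prod_pos fun j _ => ?_
  positivity

lemma QAux_mono {c : ℝ} (hc : 0 < c) : Monotone (QAux c) := by
  refine monotone_nat_of_le_succ fun n => ?_
  rw [QAux_succ]
  have h1 : (1:ℝ) ≤ ((n : ℝ) + 1 + 2*c) / ((n : ℝ) + 1) := by
    rw [le_div_iff₀ (by positivity)]
    nlinarith [hc.le]
  nlinarith [QAux_pos hc n]

/-- telescoping certificate function -/
noncomputable def gAux (c : ℝ) (n j : ℕ) : ℝ :=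
  -(j : ℝ)^2 * QAux c (n + 1 - j) * bbAux c j ^ 2 / ((n : ℝ) + 1)^2

lemma conv_id (c : ℝ) (n : ℕ) :
    ∑ k ∈ Finset.range (n+1), QAux c (n - k) * bbAux c k ^ 2 = PAux c n ^ 2 := by
  induction n with
  | zero => simp [QAux, bbAux, PAux]
  | succ n ih =>
    have hN : (0:ℝ) < (n:ℝ) + 1 := by positivity
    have key : ∀ k ∈ Finset.range (n+1),
        QAux c (n + 1 - k) * bbAux c k ^ 2
          = (((n:ℝ) + 1 + c) / ((n:ℝ) + 1))^2 * (QAux c (n - k) * bbAux c k ^ 2)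
            + (gAux c n (k+1) - gAux c n k) := by
      intro k hk
      have hkn : k ≤ n := by simpa [Nat.lt_succ_iff] using hk
      have e1 : n + 1 - k = (n - k) + 1 := by omega
      have e2 : n + 1 - (k + 1) = n - k := by omega
      have hcast : ((n - k : ℕ) : ℝ) = (n : ℝ) - (k : ℝ) := by
        push_cast [hkn]; ring
      have hkR : (k : ℝ) ≤ (n : ℝ) := by exact_mod_cast hkn
      unfold gAux
      rw [e1, e2, QAux_succ, bbAux_succ, hcast]
      push_cast
      have h1 : ((n:ℝ) - (k:ℝ)) + 1 ≠ 0 := by nlinarith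
      have h2 : ((k:ℝ)) + 1 ≠ 0 := by positivity
      have h3 : ((n:ℝ)) + 1 ≠ 0 := by positivity
      field_simp
      ring
    calc ∑ k ∈ Finset.range (n+2), QAux c (n + 1 - k) * bbAux c k ^ 2
        = (∑ k ∈ Finset.range (n+1), QAux c (n + 1 - k) * bbAux c k ^ 2)
            + QAux c 0 * bbAux c (n+1) ^ 2 := by
          rw [Finset.sum_range_succ]; norm_num
      _ = (∑ k ∈ Finset.range (n+1),
            ((((n:ℝ) + 1 + c) / ((n:ℝ) + 1))^2 * (QAux c (n - k) * bbAux c k ^ 2)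
              + (gAux c n (k+1) - gAux c n k)))
            + bbAux c (n+1) ^ 2 := by
          rw [Finset.sum_congr rfl key]; simp [QAux]
      _ = (((n:ℝ) + 1 + c) / ((n:ℝ) + 1))^2 * PAux c n ^ 2
            + (gAux c n (n+1) - gAux c n 0) + bbAux c (n+1) ^ 2 := by
          rw [Finset.sum_add_distrib, ← Finset.mul_sum, ih, Finset.sum_range_sub]
      _ = PAux c (n+1) ^ 2 := by
          have hg0 : gAux c n 0 = 0 := by simp [gAux]
          have hgn : gAux c n (n+1) = - bbAux c (n+1) ^ 2 := by
            unfold gAux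
            rw [show n + 1 - (n+1) = 0 by omega]
            have h3 : ((n:ℝ)) + 1 ≠ 0 := by positivity
            simp [QAux]
            field_simp
          rw [hg0, hgn, PAux_succ]
          field_simp
          ring

lemma prod_cast_factorial (n : ℕ) : ∏ j ∈ Finset.range n, ((j:ℝ)+1) = ((n.factorial : ℕ) : ℝ) := by
  rw [← Finset.prod_range_add_one_eq_factorial]
  push_cast
  rfl

lemma prod_shift (s : ℝ) (n : ℕ) :
    ∏ j ∈ Finset.range (n+1), (s + (j:ℝ)) =
      s * ((n.factorial : ℕ) : ℝ) * ∏ j ∈ Finset.range n, (((j:ℝ) + 1 + s) / ((j:ℝ) + 1)) := by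
  rw [Finset.prod_range_succ']
  have : ∀ j ∈ Finset.range n, s + ((j:ℕ) + 1 : ℕ) = ((j:ℝ)+1) * (((j:ℝ) + 1 + s) / ((j:ℝ) + 1)) := by
    intro j _
    have : ((j:ℝ)+1) ≠ 0 := by positivity
    push_cast
    field_simp
    ring
  rw [Finset.prod_congr rfl this, Finset.prod_mul_distrib, prod_cast_factorial]
  push_cast
  ring

lemma RAux_eq_gammaSeq {c : ℝ} (hc : 0 < c) {n : ℕ} (hn : 1 ≤ n) :
    PAux c n ^ 2 / QAux c n = 2 * Real.GammaSeq (2*c) n / (c * (Real.GammaSeq c n)^2) := by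
  have hn0 : (0:ℝ) < (n:ℝ) := by exact_mod_cast hn
  have hfac : ((n.factorial : ℕ) : ℝ) ≠ 0 := by positivity
  have hP := (PAux_pos hc n).ne'
  have hQ := (QAux_pos hc n).ne'
  have hrc : (0:ℝ) < (n:ℝ) ^ c := Real.rpow_pos_of_pos hn0 c
  have h2c : (n:ℝ) ^ (2*c) = (n:ℝ)^c * (n:ℝ)^c := by
    rw [show 2*c = c + c by ring, Real.rpow_add hn0]
  have hPe : ∏ j ∈ Finset.range (n+1), (c + (j:ℝ)) =
      c * ((n.factorial : ℕ) : ℝ) * PAux c n := by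
    rw [prod_shift c n]; rfl
  have hQe : ∏ j ∈ Finset.range (n+1), (2*c + (j:ℝ)) =
      (2*c) * ((n.factorial : ℕ) : ℝ) * QAux c n := by
    rw [prod_shift (2*c) n]; rfl
  unfold Real.GammaSeq
  rw [hPe, hQe, h2c]
  field_simp

lemma gamma_two_add_ge {c : ℝ} (hc : 0 < c) : Real.Gamma (2 + c) ≥ 1 := by
  have hconv := Real.convexOn_log_Gamma
  have h1 : (1:ℝ) ∈ Set.Ioi (0:ℝ) := by norm_num
  have h2 : (2 + c) ∈ Set.Ioi (0:ℝ) := by simp; linarith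
  have ha : (0:ℝ) ≤ c/(1+c) := by positivity
  have hb : (0:ℝ) ≤ 1/(1+c) := by positivity
  have hab : c/(1+c) + 1/(1+c) = 1 := by field_simp; ring
  have := hconv.2 h1 h2 ha hb hab
  have hpt : (c/(1+c)) • (1:ℝ) + (1/(1+c)) • (2 + c) = 2 := by
    simp [smul_eq_mul]; field_simp; ring
  rw [hpt] at this
  simp only [Function.comp_apply, Real.Gamma_two, Real.Gamma_one, Real.log_one] at this
  have hlog : 0 ≤ Real.log (Real.Gamma (2 + c)) := by
    have h1c : (0:ℝ) < 1/(1+c) := by positivity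
    simp only [smul_eq_mul, mul_zero, zero_add] at this
    nlinarith [this]
  have hpos : 0 < Real.Gamma (2 + c) := Real.Gamma_pos_of_pos (by linarith)
  nlinarith [Real.exp_log hpos, Real.add_one_le_exp (Real.log (Real.Gamma (2+c))), hlog]

lemma gamma_half_key {c : ℝ} (hc : 0 < c) :
    Real.Gamma (c + 1/2) ≤ Real.sqrt π * Real.Gamma (c + 1) := by
  have hconv := Real.convexOn_log_Gamma
  have hGpos : ∀ x : ℝ, 0 < x → 0 < Real.Gamma x := fun x hx => Real.Gamma_pos_of_pos hx
  have h1 : (1/2:ℝ) ∈ Set.Ioi (0:ℝ) := by norm_num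
  have h2 : (c + 1) ∈ Set.Ioi (0:ℝ) := by simp; linarith
  have ha : (0:ℝ) ≤ 1/(2*c+1) := by positivity
  have hb : (0:ℝ) ≤ 2*c/(2*c+1) := by positivity
  have hab : 1/(2*c+1) + 2*c/(2*c+1) = 1 := by field_simp; ring
  have hcx := hconv.2 h1 h2 ha hb hab
  have hpt : (1/(2*c+1)) • (1/2:ℝ) + (2*c/(2*c+1)) • (c + 1) = c + 1/2 := by
    simp only [smul_eq_mul]; field_simp; ring
  rw [hpt] at hcx
  simp only [Function.comp_apply, smul_eq_mul] at hcx
  -- hcx : log Γ(c+1/2) ≤ 1/(2c+1) * log Γ(1/2) + 2c/(2c+1) * log Γ(c+1)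
  have hG1 : 0 < Real.Gamma (c + 1/2) := hGpos _ (by linarith)
  have hG2 : 0 < Real.Gamma (c + 1) := hGpos _ (by linarith)
  have hG12 : Real.Gamma (1/2 : ℝ) = Real.sqrt π := Real.Gamma_one_half_eq
  -- lower bound for log Γ(c+1):  Γ(c+1)(1+c) = Γ(c+2) ≥ 1
  have hrec : Real.Gamma (c + 1 + 1) = (c+1) * Real.Gamma (c+1) := by
    rw [Real.Gamma_add_one (by positivity)]
  have hge : (c+1) * Real.Gamma (c+1) ≥ 1 := by
    rw [← hrec, show c + 1 + 1 = 2 + c by ring]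
    exact gamma_two_add_ge hc
  have h1c : (0:ℝ) < 1 + c := by linarith
  have hL1 : Real.log (Real.Gamma (c+1)) ≥ - Real.log (1 + c) := by
    have hgi : (1+c)⁻¹ ≤ Real.Gamma (c+1) := by
      rw [inv_le_iff_one_le_mul₀ h1c]
      linarith [hge]
    calc - Real.log (1+c) = Real.log (1+c)⁻¹ := (Real.log_inv _).symm
      _ ≤ Real.log (Real.Gamma (c+1)) := Real.log_le_log (by positivity) hgi
  have hlogpi : (1:ℝ) ≤ Real.log π := by
    rw [Real.le_log_iff_exp_le Real.pi_pos]
    calc Real.exp 1 ≤ 2.7182818286 := Real.exp_one_lt_d9.le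
      _ ≤ 3 := by norm_num
      _ ≤ π := Real.pi_gt_three.le
  have hlogsqrt : Real.log (Real.sqrt π) = Real.log π / 2 := Real.log_sqrt Real.pi_pos.le
  have hlog1c : Real.log (1+c) ≤ c := by
    have := Real.log_le_sub_one_of_pos h1c
    linarith
  rw [hG12, hlogsqrt] at hcx
  have hgoal_log : Real.log (Real.Gamma (c + 1/2)) ≤
      Real.log (Real.sqrt π * Real.Gamma (c+1)) := by
    rw [Real.log_mul (by positivity) hG2.ne', hlogsqrt]
    have hden : (0:ℝ) < 2*c+1 := by linarith
    have hrw : 1/(2*c+1) * (Real.log π/2) + 2*c/(2*c+1) * Real.log (Real.Gamma (c+1))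
        = (Real.log π/2 + 2*c*Real.log (Real.Gamma (c+1)))/(2*c+1) := by
      field_simp
    rw [hrw, le_div_iff₀ hden] at hcx
    nlinarith [hcx, hL1, hlogpi, hlog1c, hc, hden]
  calc Real.Gamma (c + 1/2) = Real.exp (Real.log (Real.Gamma (c + 1/2))) :=
        (Real.exp_log hG1).symm
    _ ≤ Real.exp (Real.log (Real.sqrt π * Real.Gamma (c+1))) :=
        Real.exp_le_exp.mpr hgoal_log
    _ = Real.sqrt π * Real.Gamma (c+1) := Real.exp_log (by positivity)

lemma gamma_ratio_le {c : ℝ} (hc : 0 < c) :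
    2 * Real.Gamma (2*c) / (c * Real.Gamma c ^ 2) ≤ (4:ℝ) ^ c := by
  have hGc : 0 < Real.Gamma c := Real.Gamma_pos_of_pos hc
  have hsq : (0:ℝ) < Real.sqrt π := Real.sqrt_pos.mpr Real.pi_pos
  have hdup := Real.Gamma_mul_Gamma_add_half c
  have hadd : Real.Gamma (c + 1) = c * Real.Gamma c := by
    rw [Real.Gamma_add_one hc.ne']
  have hkey := gamma_half_key hc
  -- Γ(2c) * 2^(1-2c) * √π = Γ c * Γ(c+1/2) ≤ Γ c * √π * (c * Γ c)
  have h1 : Real.Gamma (2*c) * (2:ℝ)^(1-2*c) * Real.sqrt π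
      ≤ Real.Gamma c * (Real.sqrt π * (c * Real.Gamma c)) := by
    rw [← hdup, ← hadd]
    exact mul_le_mul_of_nonneg_left hkey hGc.le
  have h2 : Real.Gamma (2*c) * (2:ℝ)^(1-2*c) ≤ c * Real.Gamma c ^ 2 := by
    have := le_of_mul_le_mul_right (by linarith [h1] : Real.Gamma (2*c) * (2:ℝ)^(1-2*c) * Real.sqrt π ≤ (c * Real.Gamma c ^2) * Real.sqrt π) hsq
    exact this
  have hpow : (2:ℝ)^(1-2*c) * (2:ℝ)^(2*c) = 2 := by
    rw [← Real.rpow_add (by norm_num : (0:ℝ) < 2)]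
    norm_num
  have h4c : (4:ℝ)^c = (2:ℝ)^(2*c) := by
    have h22 : (2:ℝ)^(2:ℝ) = 4 := by
      rw [show (2:ℝ) = ((2:ℕ):ℝ) by norm_num, Real.rpow_natCast]
      norm_num
    rw [← h22, ← Real.rpow_mul (by norm_num : (0:ℝ) ≤ 2)]
  have h2pos : (0:ℝ) < (2:ℝ)^(2*c) := Real.rpow_pos_of_pos (by norm_num) _
  rw [div_le_iff₀ (by positivity)]
  calc 2 * Real.Gamma (2*c) = Real.Gamma (2*c) * (2:ℝ)^(1-2*c) * (2:ℝ)^(2*c) := by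
        rw [mul_assoc, hpow]; ring
    _ ≤ c * Real.Gamma c ^2 * (2:ℝ)^(2*c) := by
        exact mul_le_mul_of_nonneg_right h2 h2pos.le
    _ = (4:ℝ)^c * (c * Real.Gamma c ^2) := by rw [h4c]; ring

lemma RAux_tendsto {c : ℝ} (hc : 0 < c) :
    Tendsto (fun n => PAux c n ^ 2 / QAux c n) atTop
      (𝓝 (2 * Real.Gamma (2*c) / (c * Real.Gamma c ^ 2))) := by
  have hne : c * Real.Gamma c ^ 2 ≠ 0 := by
    have := Real.Gamma_pos_of_pos hc
    positivity
  have h1 : Tendsto (fun n : ℕ => 2 * Real.GammaSeq (2*c) n / (c * (Real.GammaSeq c n)^2))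
      atTop (𝓝 (2 * Real.Gamma (2*c) / (c * Real.Gamma c ^ 2))) := by
    exact Tendsto.div ((Real.GammaSeq_tendsto_Gamma (2*c)).const_mul 2)
      (((Real.GammaSeq_tendsto_Gamma c).pow 2).const_mul c) hne
  refine h1.congr' ?_
  filter_upwards [eventually_ge_atTop 1] with n hn
  exact (RAux_eq_gammaSeq hc hn).symm

lemma PAux_sq_le {c : ℝ} (hc : 0 < c) (n : ℕ) :
    PAux c n ^ 2 ≤ (4:ℝ)^c * QAux c n := by
  have hmono : Monotone (fun n => PAux c n ^ 2 / QAux c n) := by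
    refine monotone_nat_of_le_succ fun m => ?_
    rw [div_le_div_iff₀ (QAux_pos hc m) (QAux_pos hc (m+1)), PAux_succ, QAux_succ]
    have hm : (0:ℝ) < (m:ℝ) + 1 := by positivity
    have hP := PAux_pos hc m
    have hQ := QAux_pos hc m
    have h : ((m:ℝ)+1) * ((m:ℝ)+1+2*c) ≤ ((m:ℝ)+1+c)^2 := by nlinarith
    have expand : (PAux c m * (((m:ℝ) + 1 + c) / ((m:ℝ) + 1)))^2 * QAux c m
        = (PAux c m ^2 * QAux c m) * (((m:ℝ)+1+c)^2 / ((m:ℝ)+1)^2) := by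
      field_simp
    have expand2 : PAux c m ^ 2 * (QAux c m * (((m:ℝ) + 1 + 2*c) / ((m:ℝ) + 1)))
        = (PAux c m ^2 * QAux c m) * (((m:ℝ)+1)*((m:ℝ)+1+2*c) / ((m:ℝ)+1)^2) := by
      field_simp
    rw [expand2, expand]
    refine mul_le_mul_of_nonneg_left ?_ (by positivity)
    exact div_le_div_of_nonneg_right h (by positivity)
  have hlim := RAux_tendsto hc
  have hle : PAux c n ^ 2 / QAux c n ≤ 2 * Real.Gamma (2*c) / (c * Real.Gamma c ^ 2) :=
    hmono.ge_of_tendsto hlim n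
  have := hle.trans (gamma_ratio_le hc)
  rw [div_le_iff₀ (QAux_pos hc n)] at this
  linarith [this]
  

lemma sum_bb_le {c : ℝ} (hc : 0 < c) (K : ℕ) :
    ∑ k ∈ Finset.range K, bbAux c k ^ 2 ≤ (4:ℝ)^c := by
  -- it suffices to treat K = J+1 (nonneg terms)
  have main : ∀ J : ℕ, ∑ k ∈ Finset.range (J+1), bbAux c k ^ 2 ≤ (4:ℝ)^c := by
    intro J
    -- step 1: for every m, (∑_{k≤J} bb k²) * Q m ≤ 4^c * Q (m+J)
    have step : ∀ m : ℕ,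
        (∑ k ∈ Finset.range (J+1), bbAux c k ^ 2) * QAux c m ≤ (4:ℝ)^c * QAux c (m+J) := by
      intro m
      have h1 : (∑ k ∈ Finset.range (J+1), bbAux c k ^ 2) * QAux c m
          = ∑ k ∈ Finset.range (J+1), QAux c m * bbAux c k ^ 2 := by
        rw [Finset.sum_mul]; congr 1; ext k; ring
      have h2 : ∑ k ∈ Finset.range (J+1), QAux c m * bbAux c k ^ 2
          ≤ ∑ k ∈ Finset.range (J+1), QAux c (m+J-k) * bbAux c k ^ 2 := by
        refine Finset.sum_le_sum fun k hk => ?_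
        have hkJ : k ≤ J := by simpa [Nat.lt_succ_iff] using hk
        have : m ≤ m + J - k := by omega
        exact mul_le_mul_of_nonneg_right (QAux_mono hc this) (by positivity)
      have h3 : ∑ k ∈ Finset.range (J+1), QAux c (m+J-k) * bbAux c k ^ 2
          ≤ ∑ k ∈ Finset.range (m+J+1), QAux c (m+J-k) * bbAux c k ^ 2 := by
        refine Finset.sum_le_sum_of_subset_of_nonneg
          (Finset.range_subset_range.mpr (by omega)) fun k _ _ => ?_
        exact mul_nonneg (QAux_pos hc _).le (by positivity)
      rw [h1]
      calc ∑ k ∈ Finset.range (J+1), QAux c m * bbAux c k ^ 2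
          ≤ ∑ k ∈ Finset.range (m+J+1), QAux c (m+J-k) * bbAux c k ^ 2 := h2.trans h3
        _ = PAux c (m+J) ^ 2 := conv_id c (m+J)
        _ ≤ (4:ℝ)^c * QAux c (m+J) := PAux_sq_le hc _
    -- step 2: ratio Q(m+J)/Q(m) is an explicit product tending to 1
    have hratio : ∀ m : ℕ, QAux c (m+J) / QAux c m
        = ∏ i ∈ Finset.range J, (((m:ℝ) + (i:ℝ) + 1 + 2*c) / ((m:ℝ) + (i:ℝ) + 1)) := by
      intro m
      have hQ : QAux c (m+J) = QAux c m *
          ∏ i ∈ Finset.range J, (((m:ℝ) + (i:ℝ) + 1 + 2*c) / ((m:ℝ) + (i:ℝ) + 1)) := by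
        unfold QAux
        rw [Finset.prod_range_add]
        congr 1
        refine Finset.prod_congr rfl fun i _ => ?_
        push_cast
        ring
      rw [hQ]
      exact mul_div_cancel_left₀ _ (QAux_pos hc m).ne'
    have hbound : ∀ m : ℕ, ∑ k ∈ Finset.range (J+1), bbAux c k ^ 2
        ≤ (4:ℝ)^c * (QAux c (m+J) / QAux c m) := by
      intro m
      rw [← mul_div_assoc, le_div_iff₀ (QAux_pos hc m)]
      exact step m
    -- step 3: the product tends to 1
    have hprod1 : Tendsto (fun m : ℕ =>
        ∏ i ∈ Finset.range J, (((m:ℝ) + (i:ℝ) + 1 + 2*c) / ((m:ℝ) + (i:ℝ) + 1)))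
        atTop (𝓝 1) := by
      have h1 : Tendsto (fun m : ℕ =>
          ∏ i ∈ Finset.range J, (((m:ℝ) + (i:ℝ) + 1 + 2*c) / ((m:ℝ) + (i:ℝ) + 1)))
          atTop (𝓝 (∏ i ∈ Finset.range J, (1:ℝ))) := by
        refine tendsto_finset_prod _ fun i _ => ?_
        have ha : Tendsto (fun m : ℕ => (m:ℝ) + ((i:ℝ) + 1)) atTop atTop :=
          tendsto_atTop_add_const_right _ _ tendsto_natCast_atTop_atTop
        have hdiv : Tendsto (fun m : ℕ => (2*c) / ((m:ℝ) + ((i:ℝ) + 1))) atTop (𝓝 0) :=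
          Tendsto.div_atTop tendsto_const_nhds ha
        have h2 : Tendsto (fun m : ℕ => 1 + (2*c) / ((m:ℝ) + ((i:ℝ) + 1))) atTop (𝓝 1) := by
          simpa using (tendsto_const_nhds.add hdiv)
        refine h2.congr fun m => ?_
        have hm0 : (m:ℝ) + ((i:ℝ) + 1) ≠ 0 := by positivity
        field_simp
        ring
      simpa using h1
    have htend : Tendsto (fun m : ℕ => (4:ℝ)^c * (QAux c (m+J) / QAux c m)) atTop
        (𝓝 ((4:ℝ)^c)) := by
      have := hprod1.const_mul ((4:ℝ)^c)
      simp only [mul_one] at this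
      refine this.congr fun m => ?_
      rw [hratio m]
    exact ge_of_tendsto htend (Eventually.of_forall hbound)
  rcases K with _ | J
  · simp; positivity
  · exact main J

end HypergeometricAux

open Finset Filter Topology in
theorem hypergeometric_bound (q r : ℝ) (hq : 1 < q) (hr0 : 0 ≤ r) (hr1 : r < 1) :
    (2 * π) ^ (1 - q) * gaussHypergeometric (1 - q) (1 - q) 1 (r ^ 2) <
      1 + (q - 1) ^ 2 * r ^ 2 := by
  set c : ℝ := q - 1 with hc_def
  have hc : 0 < c := by simp [hc_def]; linarith
  set x : ℝ := r ^ 2 with hx_def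
  have hx0 : 0 ≤ x := by positivity
  have hx1 : x < 1 := by
    rw [hx_def]
    calc r ^ 2 < 1 ^ 2 := by
          apply pow_lt_pow_left₀ hr1 hr0
          norm_num
      _ = 1 := one_pow 2
  -- rewrite the hypergeometric series termwise
  have hterm : ∀ n : ℕ,
      ((∏ k ∈ Finset.range n, (1 - q + (k:ℝ))) * (∏ k ∈ Finset.range n, (1 - q + (k:ℝ))) /
        ((∏ k ∈ Finset.range n, ((1:ℝ) + (k:ℝ))) * (n.factorial : ℝ))) * x ^ n
      = bbAux c n ^ 2 * x ^ n := by
    intro n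
    have h1 : ∏ k ∈ Finset.range n, ((1:ℝ) + (k:ℝ)) = ((n.factorial : ℕ) : ℝ) := by
      rw [← prod_cast_factorial n]
      exact Finset.prod_congr rfl fun k _ => by ring
    have h2 : ∏ k ∈ Finset.range n, (1 - q + (k:ℝ)) = ∏ k ∈ Finset.range n, ((k:ℝ) - c) := by
      exact Finset.prod_congr rfl fun k _ => by rw [hc_def]; ring
    have h3 : bbAux c n = (∏ k ∈ Finset.range n, ((k:ℝ) - c)) / ((n.factorial : ℕ) : ℝ) := by
      unfold bbAux
      rw [Finset.prod_div_distrib, prod_cast_factorial]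
    have hfne : ((n.factorial : ℕ) : ℝ) ≠ 0 := by
      exact_mod_cast Nat.factorial_ne_zero n
    rw [h1, h2, h3]
    field_simp
  have hsum : gaussHypergeometric (1 - q) (1 - q) 1 x = ∑' n : ℕ, bbAux c n ^ 2 * x ^ n := by
    unfold gaussHypergeometric
    exact tsum_congr hterm
  -- bound the tsum by 4 ^ c
  have hG : gaussHypergeometric (1 - q) (1 - q) 1 x ≤ (4:ℝ) ^ c := by
    rw [hsum]
    refine Real.tsum_le_of_sum_range_le (fun n => by positivity) fun n => ?_
    calc ∑ i ∈ Finset.range n, bbAux c i ^ 2 * x ^ i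
        ≤ ∑ i ∈ Finset.range n, bbAux c i ^ 2 := by
          refine Finset.sum_le_sum fun i _ => ?_
          have hxi : x ^ i ≤ 1 := pow_le_one₀ hx0 hx1.le
          nlinarith [sq_nonneg (bbAux c i)]
      _ ≤ (4:ℝ)^c := sum_bb_le hc n
  -- final numeric chain
  have h2pi : (0:ℝ) < 2 * π := by positivity
  have hfac_pos : (0:ℝ) < (2*π) ^ (1-q) := Real.rpow_pos_of_pos h2pi _
  have step1 : (2 * π) ^ (1 - q) * gaussHypergeometric (1 - q) (1 - q) 1 x
      ≤ (2 * π) ^ (1 - q) * (4:ℝ)^c := mul_le_mul_of_nonneg_left hG hfac_pos.le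
  have step2 : (2 * π) ^ (1 - q) * (4:ℝ)^c = (2/π) ^ c := by
    rw [show (1 - q) = -c by rw [hc_def]; ring, Real.rpow_neg h2pi.le]
    rw [show (2/π : ℝ) = 4 / (2*π) by
      rw [div_eq_div_iff Real.pi_pos.ne' h2pi.ne']; ring]
    rw [Real.div_rpow (by norm_num) h2pi.le]
    field_simp
  have step3 : (2/π : ℝ) ^ c < 1 := by
    apply Real.rpow_lt_one (by positivity) _ hc
    rw [div_lt_one Real.pi_pos]
    linarith [Real.pi_gt_three]
  have step4 : (1:ℝ) ≤ 1 + (q-1)^2 * r^2 := by nlinarith [sq_nonneg ((q-1)*r)]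
  calc (2 * π) ^ (1 - q) * gaussHypergeometric (1 - q) (1 - q) 1 x
      ≤ (2/π) ^ c := step2 ▸ step1
    _ < 1 := step3
    _ ≤ 1 + (q-1)^2 * r^2 := step4
end
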